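/- arXiv:2109.06371 — 6 statements merged into one kernel-verified Lean document; each statement's English description precedes it below -/
import Mathlib

section
/- Let $X_1,\ldots,X_n$ be i.i.d. $N(\mu,\sigma^2)$ random variables with $n \geq 3$, and let $b \in \mathbb{R}^n$ satisfy $\sum_{i=1}^n b_i = 0$ and $\sum_{i=1}^n b_i^2 = 1$. Then the Studentized contrast $V := (\sum_{i=1}^n b_i X_i) / \sqrt{\frac{1}{n-1}\sum_{i=1}^n (X_i - \overline{X})^2}$ has the same distribution as $(\sum_{i=1}^{n-1} Z_i)/\sqrt{\sum_{i=1}^{n-1} Z_i^2}$, where $Z_1,\ldots,Z_{n-1}$ are i.i.d. standard normal random variables. In particular, the distribution of $V$ does not depend on $\mu$, $\sigma$, or the particular contrast vector $b$. -/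
/-!
Standardizing turns the sample into a standard Gaussian vector `y` of `ℝⁿ`. Since `b ⊥ 𝟙`, both
the contrast `⟪b, y⟫` and the sum of squared deviations `‖P y‖²` only depend on the orthogonal
projection `P y` of `y` onto the hyperplane `𝟙ᗮ`, and `P y` is a standard Gaussian vector of this
`(n - 1)`-dimensional space. For a unit vector `v` and a standard Gaussian vector `z`, the law of
`(⟪v, z⟫, ‖z‖)` only depends on the dimension, because an isometry carries any unit vector to any
other. Taking `v = b` in `𝟙ᗮ` and `v = 𝟙 / √(n - 1)` in `ℝⁿ⁻¹` identifies the laws of `V` and `W`.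
-/

open MeasureTheory ProbabilityTheory Finset
open scoped NNReal ENNReal RealInnerProductSpace
open WithLp

lemma ContinuousLinearMap.norm_comp_orthogonalProjectionOnto {𝕜 E G : Type*} [RCLike 𝕜]
    [NormedAddCommGroup E] [InnerProductSpace 𝕜 E] [NormedAddCommGroup G] [NormedSpace 𝕜 G]
    (K : Submodule 𝕜 E) [K.HasOrthogonalProjection] (L : K →L[𝕜] G) :
    ‖L.comp K.orthogonalProjectionOnto‖ = ‖L‖ := by
  refine le_antisymm ?_ ?_
  · calc ‖L.comp K.orthogonalProjectionOnto‖ ≤ ‖L‖ * ‖K.orthogonalProjectionOnto‖ :=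
          L.opNorm_comp_le _
      _ ≤ ‖L‖ * 1 := by gcongr; exact K.orthogonalProjectionOnto_norm_le
      _ = ‖L‖ := mul_one _
  · refine L.opNorm_le_bound (norm_nonneg _) fun x ↦ ?_
    simpa using (L.comp K.orthogonalProjectionOnto).le_opNorm x

lemma exists_linearIsometryEquiv_apply_eq {E F : Type*}
    [NormedAddCommGroup E] [InnerProductSpace ℝ E] [FiniteDimensional ℝ E]
    [NormedAddCommGroup F] [InnerProductSpace ℝ F] [FiniteDimensional ℝ F]
    (h : Module.finrank ℝ E = Module.finrank ℝ F) {u : E} {v : F} (huv : ‖u‖ = ‖v‖) :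
    ∃ f : E ≃ₗᵢ[ℝ] F, f u = v := by
  let g := (stdOrthonormalBasis ℝ E).equiv (stdOrthonormalBasis ℝ F) (finCongr h)
  exact ⟨g.trans (Submodule.reflection (ℝ ∙ (g u - v))ᗮ),
    Submodule.reflection_sub (by simpa using huv)⟩

namespace ProbabilityTheory

section stdGaussian

variable {E F : Type*} [NormedAddCommGroup E] [InnerProductSpace ℝ E] [FiniteDimensional ℝ E]
  [MeasurableSpace E] [BorelSpace E]
  [NormedAddCommGroup F] [InnerProductSpace ℝ F] [FiniteDimensional ℝ F]
  [MeasurableSpace F] [BorelSpace F]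

lemma stdGaussian_map_orthogonalProjectionOnto (K : Submodule ℝ E) :
    (stdGaussian E).map K.orthogonalProjectionOnto = stdGaussian K := by
  apply Measure.ext_of_charFunDual
  ext L
  rw [charFunDual_map, charFunDual_stdGaussian, charFunDual_stdGaussian,
    L.norm_comp_orthogonalProjectionOnto]

lemma stdGaussian_map_inner_norm (h : Module.finrank ℝ E = Module.finrank ℝ F)
    {u : E} {v : F} (huv : ‖u‖ = ‖v‖) :
    (stdGaussian E).map (fun x ↦ (⟪u, x⟫, ‖x‖)) =
      (stdGaussian F).map (fun y ↦ (⟪v, y⟫, ‖y‖)) := by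
  obtain ⟨f, rfl⟩ := exists_linearIsometryEquiv_apply_eq h huv
  rw [← stdGaussian_map f, Measure.map_map (by fun_prop) (by fun_prop)]
  congr 1
  ext x <;> simp

end stdGaussian

lemma map_toLp_eq_stdGaussian {Ω ι : Type*} [Fintype ι] [MeasurableSpace Ω] {P : Measure Ω}
    {Y : ι → Ω → ℝ} (hY : ∀ i, Measurable (Y i)) (hind : iIndepFun Y P)
    (hlaw : ∀ i, P.map (Y i) = gaussianReal 0 1) :
    P.map (fun ω ↦ toLp 2 (fun i ↦ Y i ω)) = stdGaussian (EuclideanSpace ℝ ι) := by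
  rw [← map_pi_eq_stdGaussian, ← funext hlaw,
    ← hind.map_fun_eq_pi_map (fun i ↦ (hY i).aemeasurable),
    Measure.map_map (by fun_prop) (by fun_prop)]
  rfl

lemma gaussianReal_map_sub_div (μ : ℝ) {σ : ℝ≥0} (hσ : σ ≠ 0) :
    (gaussianReal μ (σ ^ 2)).map (fun x ↦ (x - μ) / σ) = gaussianReal 0 1 := by
  have : (fun x ↦ (x - μ) / σ) = (· / (σ : ℝ)) ∘ (· - μ) := rfl
  rw [this, ← Measure.map_map (by fun_prop) (by fun_prop), gaussianReal_map_sub_const,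
    gaussianReal_map_div_const, sub_self, zero_div]
  congr
  ext
  simp [hσ]

lemma map_toLp_sub_div_eq_stdGaussian {Ω ι : Type*} [Fintype ι] [MeasurableSpace Ω]
    {P : Measure Ω} {X : ι → Ω → ℝ} (hX : ∀ i, Measurable (X i)) (hind : iIndepFun X P)
    {μ : ℝ} {σ : ℝ≥0} (hσ : σ ≠ 0) (hlaw : ∀ i, P.map (X i) = gaussianReal μ (σ ^ 2)) :
    P.map (fun ω ↦ toLp 2 (fun i ↦ (X i ω - μ) / σ)) = stdGaussian (EuclideanSpace ℝ ι) := by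
  refine map_toLp_eq_stdGaussian (fun i ↦ (hX i).sub_const μ |>.div_const σ)
    (hind.comp (fun _ x ↦ (x - μ) / σ) fun _ ↦ by fun_prop) fun i ↦ ?_
  rw [← gaussianReal_map_sub_div μ hσ, ← hlaw i, Measure.map_map (by fun_prop) (hX i)]
  rfl

end ProbabilityTheory

lemma EuclideanSpace.norm_toLp_one (ι : Type*) [Fintype ι] :
    ‖toLp 2 (1 : ι → ℝ)‖ = √(Fintype.card ι) := by
  simp [EuclideanSpace.norm_eq]

lemma EuclideanSpace.inner_toLp_one_left {ι : Type*} [Fintype ι] (y : EuclideanSpace ℝ ι) :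
    ⟪toLp 2 (1 : ι → ℝ), y⟫ = ∑ i, y i := by
  simp [PiLp.inner_apply]

noncomputable def contrastSpace (ι : Type*) [Fintype ι] : Submodule ℝ (EuclideanSpace ℝ ι) :=
  (ℝ ∙ toLp 2 (1 : ι → ℝ))ᗮ

lemma mem_contrastSpace_iff {ι : Type*} [Fintype ι] {x : EuclideanSpace ℝ ι} :
    x ∈ contrastSpace ι ↔ ∑ i, x i = 0 := by
  rw [contrastSpace, Submodule.mem_orthogonal_singleton_iff_inner_right,
    EuclideanSpace.inner_toLp_one_left]

lemma finrank_contrastSpace (ι : Type*) [Fintype ι] [Nonempty ι] :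
    Module.finrank ℝ (contrastSpace ι) = Fintype.card ι - 1 := by
  have hone : toLp 2 (1 : ι → ℝ) ≠ 0 := by simp
  have := (ℝ ∙ toLp 2 (1 : ι → ℝ)).finrank_add_finrank_orthogonal
  rw [finrank_span_singleton hone, finrank_euclideanSpace] at this
  exact Nat.eq_sub_of_add_eq' this

lemma sum_sq_sub_mean_eq_norm_sq {ι : Type*} [Fintype ι] (y : EuclideanSpace ℝ ι) :
    ∑ i, (y i - (1 / (Fintype.card ι : ℝ)) * ∑ j, y j) ^ 2 =
      ‖(contrastSpace ι).orthogonalProjectionOnto y‖ ^ 2 := by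
  rw [Submodule.coe_norm, Submodule.coe_orthogonalProjectionOnto_apply, contrastSpace,
    Submodule.starProjection_orthogonal_val, Submodule.starProjection_singleton,
    EuclideanSpace.real_norm_sq_eq, EuclideanSpace.norm_toLp_one,
    EuclideanSpace.inner_toLp_one_left]
  simp [div_eq_inv_mul]

lemma sum_div_sqrt_sum_sq_eq_inner_div {m : ℕ} (hm : m ≠ 0) (z : EuclideanSpace ℝ (Fin m)) :
    (∑ i, z i) / √(∑ i, z i ^ 2) =
      ⟪(√m)⁻¹ • toLp 2 (1 : Fin m → ℝ), z⟫ / √(‖z‖ ^ 2 / m) := by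
  have : √(m : ℝ) ≠ 0 := by positivity
  rw [real_inner_smul_left, Real.sqrt_div' _ (Nat.cast_nonneg m), Real.sqrt_sq (norm_nonneg z),
    EuclideanSpace.norm_eq]
  simp only [PiLp.inner_apply, Pi.one_apply, RCLike.inner_apply, Real.ringHom_apply, mul_one,
    Real.norm_eq_abs, sq_abs]
  field_simp

noncomputable def studentizedContrast {n : ℕ} (b x : Fin n → ℝ) : ℝ :=
  (∑ i, b i * x i) / √((1 / (n - 1 : ℝ)) * ∑ i, (x i - (1 / (n : ℝ)) * ∑ j, x j) ^ 2)

section studentizedContrast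

variable {n : ℕ} {b : Fin n → ℝ}

@[fun_prop]
lemma measurable_studentizedContrast (b : Fin n → ℝ) : Measurable (studentizedContrast b) := by
  unfold studentizedContrast
  fun_prop

lemma studentizedContrast_sub_div (hb : ∑ i, b i = 0) (x : Fin n → ℝ) (μ : ℝ) {σ : ℝ}
    (hσ : 0 < σ) : studentizedContrast b (fun i ↦ (x i - μ) / σ) = studentizedContrast b x := by
  have hnum : ∑ i, b i * ((x i - μ) / σ) = (∑ i, b i * x i) / σ := by
    simp only [mul_div_assoc', mul_sub, ← sum_div, sum_sub_distrib, ← sum_mul, hb, zero_mul,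
      sub_zero]
  have hdev (i : Fin n) : (x i - μ) / σ - (1 / (n : ℝ)) * ∑ j, (x j - μ) / σ =
      (x i - (1 / (n : ℝ)) * ∑ j, x j) / σ := by
    have : (n : ℝ) ≠ 0 := Nat.cast_ne_zero.mpr (Fin.pos i).ne'
    rw [← sum_div, sum_sub_distrib, sum_const, card_univ, Fintype.card_fin, nsmul_eq_mul]
    field_simp
    ring
  simp only [studentizedContrast, hnum, hdev]
  simp only [div_pow, ← sum_div, mul_div_assoc']
  rw [Real.sqrt_div' _ (sq_nonneg σ), Real.sqrt_sq hσ.le, div_div_div_cancel_right₀ hσ.ne']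

lemma studentizedContrast_eq_inner_div (hb : ∑ i, b i = 0) (y : EuclideanSpace ℝ (Fin n)) :
    studentizedContrast b y =
      ⟪(⟨toLp 2 b, mem_contrastSpace_iff.mpr hb⟩ : contrastSpace (Fin n)),
        (contrastSpace (Fin n)).orthogonalProjectionOnto y⟫ /
      √(‖(contrastSpace (Fin n)).orthogonalProjectionOnto y‖ ^ 2 / (n - 1 : ℝ)) := by
  rw [Submodule.inner_orthogonalProjectionOnto_eq_of_mem_left, ← sum_sq_sub_mean_eq_norm_sq,
    studentizedContrast, one_div_mul_eq_div]
  simp [PiLp.inner_apply, mul_comm]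

lemma map_studentizedContrast_stdGaussian_eq_map_inner_div [NeZero n] (hb0 : ∑ i, b i = 0)
    (hb1 : ∑ i, b i ^ 2 = 1) {F : Type*} [NormedAddCommGroup F] [InnerProductSpace ℝ F]
    [FiniteDimensional ℝ F] [MeasurableSpace F] [BorelSpace F]
    (hF : Module.finrank ℝ F = n - 1) {v : F} (hv : ‖v‖ = 1) :
    (stdGaussian (EuclideanSpace ℝ (Fin n))).map
        (fun y : EuclideanSpace ℝ (Fin n) ↦ studentizedContrast b y) =
      (stdGaussian F).map (fun z ↦ ⟪v, z⟫ / √(‖z‖ ^ 2 / (n - 1 : ℝ))) := by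
  set K := contrastSpace (Fin n)
  set b' : K := ⟨toLp 2 b, mem_contrastSpace_iff.mpr hb0⟩
  have hb' : ‖b'‖ = ‖v‖ := by
    rw [hv, Submodule.coe_norm, EuclideanSpace.norm_eq]
    simp [b', hb1]
  have hK : Module.finrank ℝ K = Module.finrank ℝ F := by
    rw [hF, finrank_contrastSpace, Fintype.card_fin]
  set t : ℝ × ℝ → ℝ := fun p ↦ p.1 / √(p.2 ^ 2 / (n - 1 : ℝ))
  have ht : Measurable t := by fun_prop
  calc (stdGaussian (EuclideanSpace ℝ (Fin n))).map
        (fun y : EuclideanSpace ℝ (Fin n) ↦ studentizedContrast b y)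
      = (stdGaussian (EuclideanSpace ℝ (Fin n))).map
          (t ∘ (fun x : K ↦ (⟪b', x⟫, ‖x‖)) ∘ K.orthogonalProjectionOnto) := by
        congr 1
        funext y
        exact studentizedContrast_eq_inner_div hb0 y
    _ = ((stdGaussian K).map (fun x ↦ (⟪b', x⟫, ‖x‖))).map t := by
        rw [← stdGaussian_map_orthogonalProjectionOnto, Measure.map_map ht (by fun_prop),
          Measure.map_map (ht.comp (by fun_prop)) (by fun_prop)]
        rfl
    _ = (stdGaussian F).map (fun z ↦ ⟪v, z⟫ / √(‖z‖ ^ 2 / (n - 1 : ℝ))) := by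
        rw [stdGaussian_map_inner_norm hK hb', Measure.map_map ht (by fun_prop)]
        rfl

lemma map_studentizedContrast_stdGaussian (hn : 2 ≤ n) (hb0 : ∑ i, b i = 0)
    (hb1 : ∑ i, b i ^ 2 = 1) :
    (stdGaussian (EuclideanSpace ℝ (Fin n))).map
        (fun y : EuclideanSpace ℝ (Fin n) ↦ studentizedContrast b y) =
      (stdGaussian (EuclideanSpace ℝ (Fin (n - 1)))).map
        (fun z ↦ (∑ i, z i) / √(∑ i, z i ^ 2)) := by
  have : NeZero n := ⟨by omega⟩
  have hm : ((n - 1 : ℕ) : ℝ) = n - 1 := by rw [Nat.cast_sub (by omega), Nat.cast_one]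
  have hu : ‖(√(n - 1 : ℕ))⁻¹ • toLp 2 (1 : Fin (n - 1) → ℝ)‖ = 1 := by
    rw [norm_smul, EuclideanSpace.norm_toLp_one, Fintype.card_fin, norm_inv, Real.norm_eq_abs,
      abs_of_nonneg (Real.sqrt_nonneg _),
      inv_mul_cancel₀ (Real.sqrt_ne_zero'.mpr (Nat.cast_pos.mpr (by omega)))]
  rw [map_studentizedContrast_stdGaussian_eq_map_inner_div hb0 hb1 finrank_euclideanSpace_fin hu]
  congr 1
  funext z
  rw [sum_div_sqrt_sum_sq_eq_inner_div (by omega), hm]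

end studentizedContrast

theorem studentized_contrast_pivot_general
    {Ω : Type*} [MeasureSpace Ω]
    {Ω' : Type*} [MeasureSpace Ω']
    (n : ℕ) (hn : 3 ≤ n) (μ : ℝ) (σ : ℝ≥0) (hσ : 0 < σ)
    (X : Fin n → Ω → ℝ) (hXmeas : ∀ i, Measurable (X i))
    (hXindep : iIndepFun X ℙ)
    (hXlaw : ∀ i, Measure.map (X i) ℙ = gaussianReal μ (σ ^ 2))
    (Z : Fin (n - 1) → Ω' → ℝ) (hZmeas : ∀ i, Measurable (Z i))
    (hZindep : iIndepFun Z ℙ)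
    (hZlaw : ∀ i, Measure.map (Z i) ℙ = gaussianReal 0 1)
    (b : Fin n → ℝ) (hb0 : ∑ i, b i = 0) (hb1 : ∑ i, b i ^ 2 = 1)
    (V : Ω → ℝ)
    (hV : ∀ ω, V ω = (∑ i, b i * X i ω) /
      Real.sqrt ((1 / (n - 1 : ℝ)) *
        ∑ i, (X i ω - (1 / (n : ℝ)) * ∑ j, X j ω) ^ 2))
    (W : Ω' → ℝ)
    (hW : ∀ ω', W ω' = (∑ i, Z i ω') / Real.sqrt (∑ i, (Z i ω') ^ 2)) :
    Measure.map V (ℙ : Measure Ω) = Measure.map W (ℙ : Measure Ω') := by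
  have hX := map_toLp_sub_div_eq_stdGaussian hXmeas hXindep hσ.ne' hXlaw
  have hZ := map_toLp_eq_stdGaussian hZmeas hZindep hZlaw
  have hVX : V = (fun y : EuclideanSpace ℝ (Fin n) ↦ studentizedContrast b y) ∘
      (fun ω ↦ toLp 2 (fun i ↦ (X i ω - μ) / σ)) := by
    funext ω
    rw [hV ω, Function.comp_apply, studentizedContrast_sub_div hb0 _ μ (NNReal.coe_pos.mpr hσ)]
    rfl
  have hWZ : W = (fun z : EuclideanSpace ℝ (Fin (n - 1)) ↦ (∑ i, z i) / √(∑ i, z i ^ 2)) ∘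
      (fun ω ↦ toLp 2 (fun i ↦ Z i ω)) :=
    funext hW
  rw [hVX, ← Measure.map_map (by fun_prop) (by fun_prop), hX,
    hWZ, ← Measure.map_map (by fun_prop) (by fun_prop), hZ]
  exact map_studentizedContrast_stdGaussian (by omega) hb0 hb1

/-- If `X_1, …, X_n` are i.i.d. `N(μ, σ²)` with `n ≥ 3` and
`b ∈ ℝⁿ` satisfies `∑ b_i = 0` and `∑ b_i² = 1`, then the Studentized contrast
`V = (∑ b_i X_i) / √((1/(n-1)) ∑ (X_i - X̄)²)` has the same distribution as
`(∑_{i<n-1} Z_i)/√(∑_{i<n-1} Z_i²)` for i.i.d. standard normal `Z_i`; in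
particular the distribution of `V` does not depend on `μ`, `σ` or `b`. -/
theorem studentized_contrast_pivot
    {Ω : Type*} [MeasureSpace Ω] [IsProbabilityMeasure (ℙ : Measure Ω)]
    {Ω' : Type*} [MeasureSpace Ω'] [IsProbabilityMeasure (ℙ : Measure Ω')]
    (n : ℕ) (hn : 3 ≤ n) (μ : ℝ) (σ : ℝ≥0) (hσ : 0 < σ)
    (X : Fin n → Ω → ℝ) (hXmeas : ∀ i, Measurable (X i))
    (hXindep : iIndepFun X ℙ)
    (hXlaw : ∀ i, Measure.map (X i) ℙ = gaussianReal μ (σ ^ 2))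
    (Z : Fin (n - 1) → Ω' → ℝ) (hZmeas : ∀ i, Measurable (Z i))
    (hZindep : iIndepFun Z ℙ)
    (hZlaw : ∀ i, Measure.map (Z i) ℙ = gaussianReal 0 1)
    (b : Fin n → ℝ) (hb0 : ∑ i, b i = 0) (hb1 : ∑ i, b i ^ 2 = 1)
    (V : Ω → ℝ)
    (hV : ∀ ω, V ω = (∑ i, b i * X i ω) /
      Real.sqrt ((1 / (n - 1 : ℝ)) *
        ∑ i, (X i ω - (1 / (n : ℝ)) * ∑ j, X j ω) ^ 2))
    (W : Ω' → ℝ)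
    (hW : ∀ ω', W ω' = (∑ i, Z i ω') / Real.sqrt (∑ i, (Z i ω') ^ 2)) :
    Measure.map V (ℙ : Measure Ω) = Measure.map W (ℙ : Measure Ω') :=
  studentized_contrast_pivot_general n hn μ σ hσ X hXmeas hXindep hXlaw Z hZmeas hZindep hZlaw b hb0
    hb1 V hV W hW
end

section
/- Let $m \geq 4$ be an integer and define $f_V(t) := \frac{1}{\sqrt{m}}\,\frac{\Gamma(m/2)}{\Gamma(1/2)\Gamma((m-1)/2)}\,(1 - t^2/m)^{(m-3)/2}$ for $|t| \leq \sqrt{m}$ and $f_V(t) := 0$ otherwise (this is the density of $\sum_{i=1}^m Z_i/\sqrt{\sum_{i=1}^m Z_i^2}$ for i.i.d. standard normal $Z_i$). Then $f_V(t) \leq \phi(t)$ for all $t$ with $t^2 \geq 6m/(m-3)$, where $\phi(t) = \frac{1}{\sqrt{2\pi}}e^{-t^2/2}$ is the standard normal density. -/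
/-!
Split `f_V(t)` into its constant and its `t`-dependent factor and bound each separately.
By Gautschi's inequality `Γ(x + 1/2) ≤ √x Γ(x)` (log-convexity of `Γ`) the constant is at most
`√((m-1)/2) / (√m √π) ≤ 1/√(2π)`. For the other factor write `u = t²/m`; then
`log (1 - u) ≤ -u - u²/2` gives `(1 - u)^((m-3)/2) ≤ exp (-(m-3)/2 · (u + u²/2))`, and the
exponent is at most `-t²/2` exactly when `(m-3) t² ≥ 6m`.
-/

open Real

namespace Real

theorem log_one_sub_le_neg_add_sq_div_two {u : ℝ} (hu0 : 0 ≤ u) (hu1 : u < 1) :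
    log (1 - u) ≤ -(u + u ^ 2 / 2) := by
  have hseries := hasSum_pow_div_log_of_abs_lt_one (by rwa [abs_of_nonneg hu0])
  have hpartial := sum_le_hasSum (Finset.range 2) (fun i _ => by positivity) hseries
  norm_num [Finset.sum_range_succ] at hpartial
  linarith

theorem Gamma_add_half_le_sqrt_mul_Gamma {x : ℝ} (hx : 0 < x) :
    Gamma (x + 1 / 2) ≤ √x * Gamma x := by
  have hΓ := Gamma_pos_of_pos hx
  calc Gamma (x + 1 / 2) = Gamma (1 / 2 * x + 1 / 2 * (x + 1)) := by ring_nf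
    _ ≤ Gamma x ^ (1 / 2 : ℝ) * Gamma (x + 1) ^ (1 / 2 : ℝ) :=
      Gamma_mul_add_mul_le_rpow_Gamma_mul_rpow_Gamma hx (by linarith) (by norm_num)
        (by norm_num) (by norm_num)
    _ = √(x * Gamma x ^ 2) := by
      rw [Gamma_add_one hx.ne', ← mul_rpow hΓ.le (by positivity), ← sqrt_eq_rpow]
      ring_nf
    _ = √x * Gamma x := by rw [sqrt_mul hx.le, sqrt_sq hΓ.le]

theorem one_sub_rpow_le_exp {u a : ℝ} (hu0 : 0 ≤ u) (hu1 : u ≤ 1) (ha : 0 < a) :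
    (1 - u) ^ a ≤ exp (-a * (u + u ^ 2 / 2)) := by
  rcases hu1.lt_or_eq with hu1 | rfl
  · rw [rpow_def_of_pos (by linarith), exp_le_exp]
    nlinarith [log_one_sub_le_neg_add_sq_div_two hu0 hu1]
  · rw [sub_self, zero_rpow ha.ne']
    positivity

end Real

theorem selfnormalized_const_le_inv_sqrt_two_pi {m : ℝ} (hm : 1 < m) :
    1 / √m * (Gamma (m / 2) / (Gamma (1 / 2) * Gamma ((m - 1) / 2))) ≤ 1 / √(2 * π) := by
  have hΓ : 0 < Gamma ((m - 1) / 2) := Gamma_pos_of_pos (by linarith)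
  have hm0 : 0 < √m := sqrt_pos.2 (by linarith)
  have hπ : 0 < √π := sqrt_pos.2 pi_pos
  have hGautschi := Gamma_add_half_le_sqrt_mul_Gamma (x := (m - 1) / 2) (by linarith)
  rw [show (m - 1) / 2 + 1 / 2 = m / 2 by ring] at hGautschi
  calc 1 / √m * (Gamma (m / 2) / (Gamma (1 / 2) * Gamma ((m - 1) / 2)))
      = Gamma (m / 2) / (√m * √π * Gamma ((m - 1) / 2)) := by
        rw [Gamma_one_half_eq]; field_simp
    _ ≤ √((m - 1) / 2) * Gamma ((m - 1) / 2) / (√m * √π * Gamma ((m - 1) / 2)) := by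
        gcongr
    _ = √((m - 1) / 2) / (√m * √π) := mul_div_mul_right _ _ hΓ.ne'
    _ ≤ √(m / 2) / (√m * √π) := by gcongr; linarith
    _ = 1 / √(2 * π) := by
        rw [sqrt_div (by linarith), sqrt_mul zero_le_two]; field_simp

theorem one_sub_sq_div_rpow_le_exp {m t : ℝ} (hm : 3 < m) (htm : t ^ 2 ≤ m)
    (ht : 6 * m / (m - 3) ≤ t ^ 2) :
    (1 - t ^ 2 / m) ^ ((m - 3) / 2) ≤ exp (-t ^ 2 / 2) := by
  have hm0 : 0 < m := by linarith
  refine (one_sub_rpow_le_exp (by positivity) ((div_le_one hm0).2 htm)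
    (by linarith)).trans (exp_le_exp.2 ?_)
  rw [div_le_iff₀ (by linarith)] at ht
  have key : t ^ 2 * (6 * m) ≤ t ^ 2 * (t ^ 2 * (m - 3)) := by gcongr
  field_simp
  nlinarith [key]

/-- For an integer `m ≥ 4`, the density
`f_V(t) = (1/√m) Γ(m/2)/(Γ(1/2)Γ((m-1)/2)) (1 - t²/m)^((m-3)/2)` (for
`|t| ≤ √m`, and `0` otherwise) of the self-normalized sum of `m` i.i.d.
standard normals is bounded by the standard normal density `φ(t)` for all `t`
with `t² ≥ 6m/(m-3)`. -/
theorem selfnormalized_density_le_gaussian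
    (m : ℕ) (hm : 4 ≤ m)
    (fV : ℝ → ℝ)
    (hfV : ∀ t : ℝ, fV t =
      if |t| ≤ Real.sqrt m then
        (1 / Real.sqrt m) *
          (Real.Gamma ((m : ℝ) / 2) /
            (Real.Gamma (1 / 2) * Real.Gamma (((m : ℝ) - 1) / 2))) *
          (1 - t ^ 2 / (m : ℝ)) ^ (((m : ℝ) - 3) / 2)
      else 0)
    (t : ℝ) (ht : t ^ 2 ≥ 6 * (m : ℝ) / ((m : ℝ) - 3)) :
    fV t ≤ (1 / Real.sqrt (2 * Real.pi)) * Real.exp (-t ^ 2 / 2) := by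
  have hm3 : (3 : ℝ) < m := by exact_mod_cast hm
  rw [hfV t]
  split_ifs with htm
  · have htm : t ^ 2 ≤ m := (Real.sq_le (by positivity)).2 (abs_le.1 htm)
    have hbase : 0 ≤ 1 - t ^ 2 / m := sub_nonneg.2 ((div_le_one (by linarith)).2 htm)
    exact mul_le_mul (selfnormalized_const_le_inv_sqrt_two_pi (by linarith))
      (one_sub_sq_div_rpow_le_exp hm3 htm ht) (rpow_nonneg hbase _) (by positivity)
  · positivity
end

section
/- Let $\nu$ be a $\sigma$-finite measure on $\mathbb{R}$, $h \geq 0$ measurable, and suppose $\Theta := \{\theta \in \mathbb{R} : \int e^{\theta x} h(x)\,\nu(dx) < \infty\}$ is open and nonempty; set $A(\theta) := \log \int e^{\theta x} h(x)\,\nu(dx)$ and let $f_\theta(x) := \exp(\theta x - A(\theta)) h(x)$ be the density with respect to $\nu$. Assume the family is minimal (the measure $h\,d\nu$ is not concentrated at a single point, so $A'' > 0$ on $\Theta$). Let $X_1,\ldots,X_m$ be i.i.d. with density $f_{\theta_0}$ for some $\theta_0 \in \Theta$, and define the log likelihood ratio statistic $\mathrm{logLR}_m(\theta_0) := \sup_{\theta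 \in \Theta}\big((\theta-\theta_0)\sum_{i=1}^m X_i - m(A(\theta)-A(\theta_0))\big)$. Then for all $x > 0$: $\Pr_{\theta_0}\big(\sqrt{2\,\mathrm{logLR}_m(\theta_0)} > x\big) \leq 2\exp(-x^2/2)$. -/
open MeasureTheory ProbabilityTheory Finset
open scoped NNReal ENNReal

/-!
Under `θ₀`, the sum `S = ∑ X_i` has moment generating function
`E exp ((θ - θ₀) S) = exp (m (A θ - A θ₀))` for every `θ ∈ Θ`, so the Chernoff bound at tilt
`θ - θ₀` gives `P ((θ - θ₀) S - m (A θ - A θ₀) > t) ≤ exp (-t)` for each single `θ`. For `θ > θ₀`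
these events are upper rays `{S > c_θ}` and their union is again an upper ray, whose probability
is the supremum of those of the rays; the same holds for `θ < θ₀` with lower rays. Hence
`P (logLR > t) ≤ 2 exp (-t)`, and `t = x² / 2` gives the claim.
-/

open Real

section Chernoff

variable {Ω ι : Type*} {mΩ : MeasurableSpace Ω} {μ : Measure Ω}

/-- A union of upper rays is a countable directed union of rays `{q ≤ S}` with `q` rational. -/
lemma measure_exists_lt_le_of_forall_measure_le (S : Ω → ℝ) (b : ι → ℝ) {ε : ℝ≥0∞}
    (hb : ∀ i, μ {ω | b i ≤ S ω} ≤ ε) : μ {ω | ∃ i, b i < S ω} ≤ ε := by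
  let ray : {q : ℚ // ∃ i, b i ≤ q} → Set Ω := fun q => {ω | (q.1 : ℝ) ≤ S ω}
  have hsub : {ω | ∃ i, b i < S ω} ⊆ ⋃ q, ray q := by
    rintro ω ⟨i, hi⟩
    obtain ⟨q, hbq, hqS⟩ := exists_rat_btwn hi
    exact Set.mem_iUnion.2 ⟨⟨q, i, hbq.le⟩, hqS.le⟩
  have hdir : Directed (· ⊆ ·) ray :=
    Antitone.directed_le fun q₁ q₂ hq ω (hω : (q₂.1 : ℝ) ≤ S ω) =>
      (show (q₁.1 : ℝ) ≤ q₂.1 by exact_mod_cast hq).trans hω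
  calc μ {ω | ∃ i, b i < S ω} ≤ μ (⋃ q, ray q) := measure_mono hsub
    _ = ⨆ q, μ (ray q) := hdir.measure_iUnion
    _ ≤ ε := iSup_le fun ⟨_, i, hi⟩ => (measure_mono fun _ hω => hi.trans hω).trans (hb i)

lemma measure_exists_add_lt_mul_le [IsFiniteMeasure μ] {S : Ω → ℝ} (s K : ι → ℝ) (r : ℝ)
    (hs : ∀ i, 0 < s i) (hint : ∀ i, Integrable (fun ω => exp (s i * S ω)) μ)
    (hmgf : ∀ i, mgf S μ (s i) ≤ exp (K i)) :
    μ {ω | ∃ i, r + K i < s i * S ω} ≤ ENNReal.ofReal (exp (-r)) := by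
  have hset : {ω | ∃ i, r + K i < s i * S ω} = {ω | ∃ i, (r + K i) / s i < S ω} := by
    ext ω
    exact exists_congr fun i => (div_lt_iff₀' (hs i)).symm
  rw [hset]
  refine measure_exists_lt_le_of_forall_measure_le S _ fun i => ?_
  rw [← ofReal_measureReal]
  refine ENNReal.ofReal_le_ofReal ((measure_ge_le_exp_mul_mgf _ (hs i).le (hint i)).trans ?_)
  calc exp (-s i * ((r + K i) / s i)) * mgf S μ (s i)
      ≤ exp (-s i * ((r + K i) / s i)) * exp (K i) := by gcongr; exact hmgf i
    _ = exp (-r) := by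
      rw [← exp_add]
      congr 1
      field_simp [(hs i).ne']
      ring

lemma measure_exists_add_lt_mul_le_two_mul [IsFiniteMeasure μ] {S : Ω → ℝ} (s K : ι → ℝ)
    (r : ℝ) (hs : ∀ i, s i ≠ 0) (hint : ∀ i, Integrable (fun ω => exp (s i * S ω)) μ)
    (hmgf : ∀ i, mgf S μ (s i) ≤ exp (K i)) :
    μ {ω | ∃ i, r + K i < s i * S ω} ≤ ENNReal.ofReal (2 * exp (-r)) := by
  let ιpos := {i // 0 < s i}
  let ιneg := {i // s i < 0}
  have hsub : {ω | ∃ i, r + K i < s i * S ω} ⊆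
      {ω | ∃ i : ιpos, r + K i < s i * S ω} ∪ {ω | ∃ i : ιneg, r + K i < -s i * -S ω} := by
    rintro ω ⟨i, hi⟩
    rcases (hs i).lt_or_gt with hneg | hpos
    · exact Or.inr ⟨⟨i, hneg⟩, by rwa [neg_mul_neg]⟩
    · exact Or.inl ⟨⟨i, hpos⟩, hi⟩
  have hupper := measure_exists_add_lt_mul_le (μ := μ) (fun i : ιpos => s i) (fun i => K i) r
    (fun i => i.2) (fun i => hint i) (fun i => hmgf i)
  have hlower := measure_exists_add_lt_mul_le (μ := μ) (S := -S) (fun i : ιneg => -s i)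
    (fun i => K i) r (fun i => neg_pos.2 i.2)
    (fun i => by simpa only [Pi.neg_apply, neg_mul_neg] using hint i)
    (fun i => by simpa only [mgf_neg, neg_neg] using hmgf i)
  calc μ {ω | ∃ i, r + K i < s i * S ω}
      ≤ ENNReal.ofReal (exp (-r)) + ENNReal.ofReal (exp (-r)) :=
        (measure_mono hsub).trans ((measure_union_le _ _).trans (add_le_add hupper hlower))
    _ = ENNReal.ofReal (2 * exp (-r)) := by
      rw [← ENNReal.ofReal_add (exp_pos _).le (exp_pos _).le, two_mul]

end Chernoff

section ExponentialFamily

variable {ν : Measure ℝ} {h : ℝ → ℝ} {θ₀ θ a : ℝ}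

lemma toReal_ofReal_exp_mul_sub_smul_exp (hpos : ∀ y, 0 ≤ h y) (y : ℝ) :
    (ENNReal.ofReal (exp (θ₀ * y - a) * h y)).toReal • exp ((θ - θ₀) * y)
      = exp (-a) * (exp (θ * y) * h y) := by
  rw [ENNReal.toReal_ofReal (mul_nonneg (exp_pos _).le (hpos y)), smul_eq_mul, mul_right_comm,
    ← exp_add, mul_left_comm, ← mul_assoc, ← exp_add]
  ring_nf

lemma integrable_exp_mul_withDensity (hmeas : Measurable h) (hpos : ∀ y, 0 ≤ h y)
    (hθ : Integrable (fun y => exp (θ * y) * h y) ν) :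
    Integrable (fun y => exp ((θ - θ₀) * y))
      (ν.withDensity fun y => ENNReal.ofReal (exp (θ₀ * y - a) * h y)) := by
  rw [integrable_withDensity_iff_integrable_smul' (by fun_prop)
    (ae_of_all _ fun _ => ENNReal.ofReal_lt_top)]
  simp only [toReal_ofReal_exp_mul_sub_smul_exp hpos]
  exact hθ.const_mul _

lemma integral_exp_mul_withDensity (hmeas : Measurable h) (hpos : ∀ y, 0 ≤ h y) :
    ∫ y, exp ((θ - θ₀) * y) ∂(ν.withDensity fun y => ENNReal.ofReal (exp (θ₀ * y - a) * h y))
      = exp (-a) * ∫ y, exp (θ * y) * h y ∂ν := by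
  rw [integral_withDensity_eq_integral_toReal_smul₀ (by fun_prop)
    (ae_of_all _ fun _ => ENNReal.ofReal_lt_top)]
  simp only [toReal_ofReal_exp_mul_sub_smul_exp hpos]
  exact integral_const_mul _ _

lemma integral_exp_mul_pos (hpos : ∀ y, 0 ≤ h y)
    (hθ : Integrable (fun y => exp (θ * y) * h y) ν) (hh : ¬ h =ᵐ[ν] 0) :
    0 < ∫ y, exp (θ * y) * h y ∂ν := by
  have hsupp : Function.support (fun y => exp (θ * y) * h y) = Function.support h := by
    ext y
    simp [exp_ne_zero]
  rw [integral_pos_iff_support_of_nonneg (fun y => mul_nonneg (exp_pos _).le (hpos y)) hθ,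
    hsupp, pos_iff_ne_zero]
  exact fun h0 => hh (ae_iff.2 (by simpa [Function.support] using h0))

variable {Ω : Type*} {mΩ : MeasurableSpace Ω} {P : Measure Ω} {X : Ω → ℝ}

lemma integrable_exp_mul_of_map_eq_withDensity (hX : Measurable X) (hmeas : Measurable h)
    (hpos : ∀ y, 0 ≤ h y)
    (hlaw : P.map X = ν.withDensity fun y => ENNReal.ofReal (exp (θ₀ * y - a) * h y))
    (hθ : Integrable (fun y => exp (θ * y) * h y) ν) :
    Integrable (fun ω => exp ((θ - θ₀) * X ω)) P := by
  have hmap := hlaw ▸ integrable_exp_mul_withDensity (θ₀ := θ₀) (a := a) hmeas hpos hθ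
  exact (integrable_map_measure (by fun_prop) hX.aemeasurable).1 hmap

lemma mgf_eq_exp_sub_of_map_eq_withDensity [IsProbabilityMeasure P] {A : ℝ → ℝ}
    (hX : Measurable X) (hmeas : Measurable h) (hpos : ∀ y, 0 ≤ h y)
    (hlaw : P.map X = ν.withDensity fun y => ENNReal.ofReal (exp (θ₀ * y - a) * h y))
    (hθ : Integrable (fun y => exp (θ * y) * h y) ν)
    (hAθ : A θ = log (∫ y, exp (θ * y) * h y ∂ν)) :
    mgf X P (θ - θ₀) = exp (A θ - a) := by
  have hh : ¬ h =ᵐ[ν] 0 := by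
    intro h0
    have hzero : ν.withDensity (fun y => ENNReal.ofReal (exp (θ₀ * y - a) * h y)) = 0 := by
      rw [withDensity_congr_ae (g := 0) (by filter_upwards [h0] with y hy; simp [hy]),
        withDensity_zero]
    have := Measure.isProbabilityMeasure_map (μ := P) hX.aemeasurable
    exact IsProbabilityMeasure.ne_zero (P.map X) (hlaw.trans hzero)
  rw [← mgf_id_map hX.aemeasurable, mgf, hlaw]
  simp only [id, integral_exp_mul_withDensity hmeas hpos]
  rw [hAθ, exp_sub, exp_log (integral_exp_mul_pos hpos hθ hh), exp_neg]
  ring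

lemma mgf_sum_eq_exp_mul_sub_of_map_eq_withDensity {ι : Type*} [Fintype ι] {A : ℝ → ℝ}
    {X : ι → Ω → ℝ} (hX : ∀ i, Measurable (X i)) (hindep : iIndepFun X P)
    (hmeas : Measurable h) (hpos : ∀ y, 0 ≤ h y)
    (hlaw : ∀ i, P.map (X i) = ν.withDensity fun y => ENNReal.ofReal (exp (θ₀ * y - a) * h y))
    (hθ : Integrable (fun y => exp (θ * y) * h y) ν)
    (hAθ : A θ = log (∫ y, exp (θ * y) * h y ∂ν)) :
    mgf (∑ i, X i) P (θ - θ₀) = exp (Fintype.card ι * (A θ - a)) := by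
  have := hindep.isProbabilityMeasure
  rw [hindep.mgf_sum hX, Fintype.prod_congr _ _ fun i =>
    mgf_eq_exp_sub_of_map_eq_withDensity (hX i) hmeas hpos (hlaw i) hθ hAθ, prod_const,
    card_univ, ← exp_nat_mul]

end ExponentialFamily

/-- `0 ≤ t` rules out the junk value `0` of an empty or unbounded supremum. -/
lemma exists_mem_lt_of_lt_biSup {α : Type*} {s : Set α} {f : α → ℝ} {t : ℝ} (ht : 0 ≤ t)
    (hlt : t < ⨆ i ∈ s, f i) : ∃ i ∈ s, t < f i := by
  by_contra! hle
  exact hlt.not_ge (Real.iSup_le (fun i => Real.iSup_le (hle i) ht) ht)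

theorem sqrt_logLR_subgaussian_general
    (ν : Measure ℝ)
    (h : ℝ → ℝ) (hmeas : Measurable h) (hpos : ∀ x, 0 ≤ h x)
    (Θ : Set ℝ)
    (hΘ : Θ = {θ : ℝ | Integrable (fun x => Real.exp (θ * x) * h x) ν})
    (A : ℝ → ℝ)
    (hA : ∀ θ ∈ Θ, A θ = Real.log (∫ x, Real.exp (θ * x) * h x ∂ν))
    (θ₀ : ℝ)
    {Ω : Type*} [MeasureSpace Ω] [IsProbabilityMeasure (ℙ : Measure Ω)]
    (m : ℕ)
    (X : Fin m → Ω → ℝ) (hXmeas : ∀ i, Measurable (X i))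
    (hXindep : iIndepFun X ℙ)
    (hXlaw : ∀ i, Measure.map (X i) ℙ =
      ν.withDensity (fun x => ENNReal.ofReal (Real.exp (θ₀ * x - A θ₀) * h x)))
    (x : ℝ) (hx : 0 < x) :
    ℙ {ω | Real.sqrt (2 * ⨆ θ ∈ Θ,
        ((θ - θ₀) * ∑ i, X i ω - (m : ℝ) * (A θ - A θ₀))) > x}
      ≤ ENNReal.ofReal (2 * Real.exp (-x ^ 2 / 2)) := by
  let ι := {θ // θ ∈ Θ ∧ θ ≠ θ₀}
  have hΘint (θ : ι) : Integrable (fun y => exp (θ * y) * h y) ν := hΘ ▸ θ.2.1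
  have hint (θ : ι) : Integrable (fun ω => exp ((θ.1 - θ₀) * (∑ i, X i) ω)) ℙ :=
    hXindep.integrable_exp_mul_sum hXmeas fun i _ =>
      integrable_exp_mul_of_map_eq_withDensity (hXmeas i) hmeas hpos (hXlaw i) (hΘint θ)
  have hmgf (θ : ι) : mgf (∑ i, X i) ℙ (θ.1 - θ₀) = exp (m * (A θ - A θ₀)) := by
    simpa using mgf_sum_eq_exp_mul_sub_of_map_eq_withDensity hXmeas hXindep hmeas hpos hXlaw
      (hΘint θ) (hA θ θ.2.1)
  have hsub : {ω | √(2 * ⨆ θ ∈ Θ, ((θ - θ₀) * ∑ i, X i ω - (m : ℝ) * (A θ - A θ₀))) > x} ⊆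
      {ω | ∃ θ : ι, x ^ 2 / 2 + m * (A θ - A θ₀) < (θ.1 - θ₀) * (∑ i, X i) ω} := by
    intro ω hω
    have hlt := (lt_sqrt hx.le).1 hω
    obtain ⟨θ, hθ, hθlt⟩ := exists_mem_lt_of_lt_biSup (t := x ^ 2 / 2) (s := Θ)
      (f := fun θ => (θ - θ₀) * ∑ i, X i ω - m * (A θ - A θ₀)) (by positivity) (by linarith)
    have hne : θ ≠ θ₀ := by rintro rfl; simp at hθlt; linarith [pow_pos hx 2]
    exact ⟨⟨θ, hθ, hne⟩, by simp only [Finset.sum_apply]; linarith⟩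
  calc _ ≤ _ := measure_mono hsub
    _ ≤ _ := measure_exists_add_lt_mul_le_two_mul _ _ _ (fun θ => sub_ne_zero.2 θ.2.2) hint
        fun θ => (hmgf θ).le
    _ = _ := by ring_nf

/-- Sub-Gaussian tail bound for the square root of the log
likelihood ratio statistic in a regular minimal one-dimensional natural
exponential family: for i.i.d. `X_1, …, X_m ~ f_{θ₀}` and
`logLR_m(θ₀) = sup_{θ ∈ Θ} ((θ-θ₀) ∑ X_i - m (A(θ)-A(θ₀)))`, one has
`P(√(2 logLR_m(θ₀)) > x) ≤ 2 exp(-x²/2)` for every `x > 0`. -/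
theorem sqrt_logLR_subgaussian
    (ν : Measure ℝ) [SigmaFinite ν]
    (h : ℝ → ℝ) (hmeas : Measurable h) (hpos : ∀ x, 0 ≤ h x)
    (Θ : Set ℝ)
    (hΘ : Θ = {θ : ℝ | Integrable (fun x => Real.exp (θ * x) * h x) ν})
    (hΘopen : IsOpen Θ) (hΘne : Θ.Nonempty)
    (A : ℝ → ℝ)
    (hA : ∀ θ ∈ Θ, A θ = Real.log (∫ x, Real.exp (θ * x) * h x ∂ν))
    -- minimality: the family is not degenerate, so `A'' > 0` on `Θ`
    (hmin : ∀ θ ∈ Θ, 0 < iteratedDeriv 2 A θ)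
    (θ₀ : ℝ) (hθ₀ : θ₀ ∈ Θ)
    {Ω : Type*} [MeasureSpace Ω] [IsProbabilityMeasure (ℙ : Measure Ω)]
    (m : ℕ) (hm : 1 ≤ m)
    (X : Fin m → Ω → ℝ) (hXmeas : ∀ i, Measurable (X i))
    (hXindep : iIndepFun X ℙ)
    (hXlaw : ∀ i, Measure.map (X i) ℙ =
      ν.withDensity (fun x => ENNReal.ofReal (Real.exp (θ₀ * x - A θ₀) * h x)))
    (x : ℝ) (hx : 0 < x) :
    ℙ {ω | Real.sqrt (2 * ⨆ θ ∈ Θ,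
        ((θ - θ₀) * ∑ i, X i ω - (m : ℝ) * (A θ - A θ₀))) > x}
      ≤ ENNReal.ofReal (2 * Real.exp (-x ^ 2 / 2)) :=
  sqrt_logLR_subgaussian_general ν h hmeas hpos Θ hΘ A hA θ₀ m X hXmeas hXindep hXlaw x hx
end

section
/- Let $n = mp$ for integers $m \geq 1$, $p \geq 2$, and let $\mathbf{A}$ be an $m\times n$ real matrix that has $p$ non-zero entries in each row and exactly one non-zero entry in each column, where these entries equal $1$ in columns $i \leq m$ and equal $-1/(p-1)$ in columns $i > m$. For any $\mathbf{X} = (X_1,\ldots,X_n)^T \in \mathbb{R}^n$, setting $\widetilde{\mathbf{X}} = \mathbf{A}\mathbf{X}$ and $\overline{X} = \frac{1}{n}\sum_{i=1}^n X_i$, the self-normalized sum of the $\widetilde{X}_i$ satisfies the identity $\frac{\sum_{i=1}^m \widetilde{X}_i}{\sqrt{\sum_{i=1}^m \widetilde{X}_i^2}} = \frac{n}{n-m}\cdot\frac{\sum_{i=1}^m (X_i - \overline{X})}{\sqrt{\mathbf{X}^T\mathbf{A}^T\mathbf{A}\mathbf{X}}}$ (whenever the denominators are nonzero). -/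
/-! Every column of `A` has a single non-zero entry, so the column sums of `A` are `1` on the
first `m` columns and `-1/(p-1)` on the others, and `∑ X̃ᵢ = a - b/(p-1)` where `a` and `b` are the
sums of `X` over these two blocks of columns. As `n/(n-m) = p/(p-1)` and
`∑_{i≤m} (Xᵢ - X̄) = a - (a+b)/p`, the numerators agree; `Xᵀ Aᵀ A X = ∑ X̃ᵢ²` matches the
denominators. -/

open Finset Matrix

theorem Finset.exists_ne_zero_and_sum_eq_of_card_support_eq_one {ι M : Type*} [Fintype ι]
    [AddCommMonoid M] [DecidableEq M] {f : ι → M} (h : #{i | f i ≠ 0} = 1) :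
    ∃ i, f i ≠ 0 ∧ ∑ k, f k = f i := by
  obtain ⟨i, hi⟩ := card_eq_one.mp h
  refine ⟨i, by simpa using hi.ge (mem_singleton_self i), ?_⟩
  rw [← sum_filter_ne_zero, hi, sum_singleton]

theorem Matrix.sum_mulVec_eq_sum_colSum {m n R : Type*} [Fintype m] [Fintype n]
    [CommSemiring R] (A : Matrix m n R) (x : n → R) :
    ∑ i, (A *ᵥ x) i = ∑ j, (∑ i, A i j) * x j := by
  rw [← one_dotProduct, dotProduct_mulVec]
  simp [vecMul, dotProduct]

theorem Matrix.dotProduct_transpose_mul_mulVec_self {m n R : Type*} [Fintype m] [Fintype n]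
    [CommSemiring R] (A : Matrix m n R) (x : n → R) :
    x ⬝ᵥ (Aᵀ * A) *ᵥ x = ∑ i, (A *ᵥ x) i ^ 2 := by
  rw [← mulVec_mulVec, dotProduct_mulVec, vecMul_transpose]
  simp [dotProduct, sq]

section EmpiricalCentering

variable {m p n : ℕ} {A : Matrix (Fin m) (Fin n) ℝ}

theorem colSum_of_empiricalCentering
    (hcol : ∀ j, (Finset.univ.filter (fun i => A i j ≠ 0)).card = 1)
    (hone : ∀ (i : Fin m) (j : Fin n), (j : ℕ) < m → A i j ≠ 0 → A i j = 1)
    (hneg : ∀ (i : Fin m) (j : Fin n), m ≤ (j : ℕ) → A i j ≠ 0 →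
      A i j = -(1 / ((p : ℝ) - 1)))
    (j : Fin n) :
    ∑ i, A i j = if (j : ℕ) < m then 1 else -(1 / ((p : ℝ) - 1)) := by
  obtain ⟨i, hne, hsum⟩ := exists_ne_zero_and_sum_eq_of_card_support_eq_one (hcol j)
  split_ifs with hj
  · rw [hsum, hone i j hj hne]
  · rw [hsum, hneg i j (not_lt.mp hj) hne]

theorem sum_mulVec_of_empiricalCentering
    (hcol : ∀ j, (Finset.univ.filter (fun i => A i j ≠ 0)).card = 1)
    (hone : ∀ (i : Fin m) (j : Fin n), (j : ℕ) < m → A i j ≠ 0 → A i j = 1)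
    (hneg : ∀ (i : Fin m) (j : Fin n), m ≤ (j : ℕ) → A i j ≠ 0 →
      A i j = -(1 / ((p : ℝ) - 1)))
    (X : Fin n → ℝ) :
    ∑ i, (A *ᵥ X) i = ∑ j ∈ univ.filter (fun j : Fin n => (j : ℕ) < m), X j
      - 1 / ((p : ℝ) - 1) * ∑ j ∈ univ.filter (fun j : Fin n => ¬ (j : ℕ) < m), X j := by
  simp_rw [sum_mulVec_eq_sum_colSum, colSum_of_empiricalCentering hcol hone hneg, ite_mul,
    sum_ite, one_mul, neg_mul, sum_neg_distrib, mul_sum, sub_eq_add_neg]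

end EmpiricalCentering

theorem centering_ratio_eq {m p a b : ℝ} (hm : m ≠ 0) (hp : 1 < p) :
    a - 1 / (p - 1) * b = m * p / (m * p - m) * (a - m * (1 / (m * p) * (a + b))) := by
  have hp' : p - 1 ≠ 0 := by linarith
  have hp0 : p ≠ 0 := by linarith
  have hmp : m * p - m ≠ 0 := by rw [← mul_sub_one]; exact mul_ne_zero hm hp'
  field_simp
  ring

theorem selfnormalized_centering_identity_general
    (m p n : ℕ) (hm : 1 ≤ m) (hp : 2 ≤ p) (hn : n = m * p)
    (A : Matrix (Fin m) (Fin n) ℝ)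
    (hcol : ∀ j, (Finset.univ.filter (fun i => A i j ≠ 0)).card = 1)
    (hone : ∀ (i : Fin m) (j : Fin n), (j : ℕ) < m → A i j ≠ 0 → A i j = 1)
    (hneg : ∀ (i : Fin m) (j : Fin n), m ≤ (j : ℕ) → A i j ≠ 0 → A i j = -(1 / ((p : ℝ) - 1)))
    (X : Fin n → ℝ) :
    (∑ i, A.mulVec X i) / Real.sqrt (∑ i, (A.mulVec X i) ^ 2) =
      ((n : ℝ) / ((n : ℝ) - m)) *
        ((∑ j ∈ Finset.univ.filter (fun j : Fin n => (j : ℕ) < m),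
            (X j - (1 / (n : ℝ)) * ∑ k, X k)) /
          Real.sqrt (X ⬝ᵥ (Aᵀ * A).mulVec X)) := by
  have hcard : #{j : Fin n | (j : ℕ) < m} = m := by
    rw [Fin.card_filter_val_lt, hn]
    exact min_eq_right (Nat.le_mul_of_pos_right m (by omega))
  have hm' : (m : ℝ) ≠ 0 := by positivity
  have hp' : 1 < (p : ℝ) := by exact_mod_cast hp
  have hnR : (n : ℝ) = m * p := by exact_mod_cast hn
  rw [dotProduct_transpose_mul_mulVec_self, sum_mulVec_of_empiricalCentering hcol hone hneg,
    sum_sub_distrib, sum_const, hcard, nsmul_eq_mul, ← sum_filter_add_sum_filter_not univ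
      (fun j : Fin n => (j : ℕ) < m) X, hnR, centering_ratio_eq hm' hp',
    mul_div_assoc]

/-- For an empirical centering matrix `A` (an `m × n` matrix,
`n = mp`, with `p` non-zero entries per row, exactly one non-zero entry per
column, the non-zero entries being `1` in columns `i ≤ m` and `-1/(p-1)` in
columns `i > m`) and any `X ∈ ℝⁿ`, the self-normalized sum of `X~ = A X`
satisfies
`(∑ X~_i)/√(∑ X~_i²) = (n/(n-m)) (∑_{i≤m}(X_i - X̄))/√(Xᵀ Aᵀ A X)`,
whenever the denominators are nonzero. -/
theorem selfnormalized_centering_identity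
    (m p n : ℕ) (hm : 1 ≤ m) (hp : 2 ≤ p) (hn : n = m * p)
    (A : Matrix (Fin m) (Fin n) ℝ)
    (hrow : ∀ i, (Finset.univ.filter (fun j => A i j ≠ 0)).card = p)
    (hcol : ∀ j, (Finset.univ.filter (fun i => A i j ≠ 0)).card = 1)
    (hone : ∀ (i : Fin m) (j : Fin n), (j : ℕ) < m → A i j ≠ 0 → A i j = 1)
    (hneg : ∀ (i : Fin m) (j : Fin n), m ≤ (j : ℕ) → A i j ≠ 0 → A i j = -(1 / ((p : ℝ) - 1)))
    (X : Fin n → ℝ)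
    (hden1 : ∑ i, (A.mulVec X i) ^ 2 ≠ 0)
    (hden2 : X ⬝ᵥ (Aᵀ * A).mulVec X ≠ 0) :
    (∑ i, A.mulVec X i) / Real.sqrt (∑ i, (A.mulVec X i) ^ 2) =
      ((n : ℝ) / ((n : ℝ) - m)) *
        ((∑ j ∈ Finset.univ.filter (fun j : Fin n => (j : ℕ) < m),
            (X j - (1 / (n : ℝ)) * ∑ k, X k)) /
          Real.sqrt (X ⬝ᵥ (Aᵀ * A).mulVec X)) :=
  selfnormalized_centering_identity_general m p n hm hp hn A hcol hone hneg X
end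

section
/- Let $X_1,\ldots,X_m$ be independent random variables, each with a distribution symmetric about $0$ (i.e., $X_i$ and $-X_i$ have the same distribution). Then for every $t > 0$: $\Pr\Big(\frac{\sum_{i=1}^m X_i}{\sqrt{\sum_{i=1}^m X_i^2}} > t\Big) \leq \exp(-t^2/2)$, where the event is understood to be contained in $\{\sum_{i=1}^m X_i^2 > 0\}$. -/
open MeasureTheory ProbabilityTheory Finset
open scoped NNReal ENNReal
open Real

/-! Flipping the signs of some coordinates of a random vector with independent symmetric
coordinates does not change its law, so the probability of the event equals its average over
all `2^m` sign patterns. For a fixed vector `y`, the patterns `ε` with `∑ εᵢ yᵢ > t ‖y‖` form at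
most a fraction `exp (-t²/2)` of all patterns: this is the Chernoff bound for a Rademacher sum,
using `cosh x ≤ exp (x²/2)`. -/

section SignFlip

variable {ι : Type*}

def signFlip (ε : ι → Bool) (y : ι → ℝ) : ι → ℝ := fun i => if ε i then -y i else y i

lemma signFlip_sq (ε : ι → Bool) (y : ι → ℝ) (i : ι) : signFlip ε y i ^ 2 = y i ^ 2 := by
  unfold signFlip; split_ifs <;> simp

variable [Fintype ι] [DecidableEq ι]

lemma sum_exp_mul_sum_signFlip (x : ι → ℝ) (l : ℝ) :
    ∑ ε : ι → Bool, exp (l * ∑ i, signFlip ε x i) = ∏ i, 2 * cosh (l * x i) := by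
  have h := Fintype.prod_sum fun i (b : Bool) => exp (l * if b then -x i else x i)
  simp only [Fintype.sum_bool, if_true, if_false, Bool.false_eq_true] at h
  simp only [mul_sum, exp_sum, signFlip, ← h, cosh_eq]
  refine prod_congr rfl fun i _ => ?_
  ring_nf

lemma sum_exp_mul_sum_signFlip_le (x : ι → ℝ) (l : ℝ) :
    ∑ ε : ι → Bool, exp (l * ∑ i, signFlip ε x i)
      ≤ Fintype.card (ι → Bool) * exp (l ^ 2 * (∑ i, x i ^ 2) / 2) := by
  calc ∑ ε : ι → Bool, exp (l * ∑ i, signFlip ε x i)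
      = ∏ i, 2 * cosh (l * x i) := sum_exp_mul_sum_signFlip x l
    _ ≤ ∏ i, 2 * exp ((l * x i) ^ 2 / 2) := by
        gcongr with i
        exact cosh_le_exp_half_sq _
    _ = Fintype.card (ι → Bool) * exp (l ^ 2 * (∑ i, x i ^ 2) / 2) := by
        rw [prod_mul_distrib, prod_const, ← exp_sum, ← sum_div, mul_sum]
        simp [mul_pow]

end SignFlip

lemma card_filter_le_sum_exp {α : Type*} (s : Finset α) (f : α → ℝ) (a : ℝ) :
    (#{x ∈ s | a ≤ f x} : ℝ) ≤ ∑ x ∈ s, exp (f x - a) := by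
  rw [card_filter, Nat.cast_sum]
  refine sum_le_sum fun x _ => ?_
  split_ifs with h
  · simpa using one_le_exp (sub_nonneg.2 h)
  · simpa using (exp_pos _).le

def selfNormalizedTail (ι : Type*) [Fintype ι] (t : ℝ) : Set (ι → ℝ) :=
  {y | 0 < ∑ i, y i ^ 2 ∧ (∑ i, y i) / √(∑ i, y i ^ 2) > t}

lemma measurableSet_selfNormalizedTail (ι : Type*) [Fintype ι] (t : ℝ) :
    MeasurableSet (selfNormalizedTail ι t) := by
  unfold selfNormalizedTail
  measurability

open Classical in
lemma card_signFlip_mem_selfNormalizedTail_le {ι : Type*} [Fintype ι] [DecidableEq ι]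
    (y : ι → ℝ) {t : ℝ} (ht : 0 ≤ t) :
    (#{ε : ι → Bool | signFlip ε y ∈ selfNormalizedTail ι t} : ℝ)
      ≤ exp (-t ^ 2 / 2) * Fintype.card (ι → Bool) := by
  simp only [selfNormalizedTail, Set.mem_ofPred_eq, signFlip_sq]
  by_cases hQ : 0 < ∑ i, y i ^ 2
  swap
  · simp [hQ]
    positivity
  set v := √(∑ i, y i ^ 2)
  have hv : 0 < v := sqrt_pos.2 hQ
  have hv2 : v ^ 2 = ∑ i, y i ^ 2 := sq_sqrt hQ.le
  calc (#{ε : ι → Bool | 0 < ∑ i, y i ^ 2 ∧ (∑ i, signFlip ε y i) / v > t} : ℝ)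
      ≤ #{ε : ι → Bool | t ^ 2 ≤ t / v * ∑ i, signFlip ε y i} := by
        refine Nat.cast_le.2 (card_le_card fun ε hε => ?_)
        simp only [mem_filter, mem_univ, true_and, gt_iff_lt, lt_div_iff₀ hv] at hε ⊢
        rw [div_mul_eq_mul_div, le_div_iff₀ hv]
        nlinarith [hε.2]
    _ ≤ ∑ ε : ι → Bool, exp (t / v * ∑ i, signFlip ε y i - t ^ 2) :=
        card_filter_le_sum_exp _ _ _
    _ = exp (-t ^ 2) * ∑ ε : ι → Bool, exp (t / v * ∑ i, signFlip ε y i) := by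
        rw [mul_sum]
        refine sum_congr rfl fun ε _ => ?_
        rw [← exp_add]
        ring_nf
    _ ≤ exp (-t ^ 2) * (Fintype.card (ι → Bool) * exp ((t / v) ^ 2 * (∑ i, y i ^ 2) / 2)) := by
        gcongr
        exact sum_exp_mul_sum_signFlip_le y _
    _ = exp (-t ^ 2 / 2) * Fintype.card (ι → Bool) := by
        rw [← hv2, div_pow, div_mul_cancel₀ _ (by positivity), mul_left_comm, ← exp_add]
        ring_nf

lemma measurePreserving_signFlip {ι : Type*} [Fintype ι] (ν : ι → Measure ℝ)
    [∀ i, SigmaFinite (ν i)] [∀ i, (ν i).IsNegInvariant] (ε : ι → Bool) :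
    MeasurePreserving (signFlip ε) (Measure.pi ν) (Measure.pi ν) := by
  have h := measurePreserving_pi ν ν (f := fun i => if ε i then Neg.neg else id) fun i => by
    split_ifs
    exacts [Measure.measurePreserving_neg (ν i), MeasurePreserving.id (ν i)]
  convert h using 2 with y
  ext i
  unfold signFlip
  split_ifs <;> rfl

open Classical in
lemma measure_le_of_card_mem_le {α G : Type*} [MeasurableSpace α] [Fintype G] [Nonempty G]
    {μ : Measure α} [IsProbabilityMeasure μ] {T : G → α → α}
    (hT : ∀ g, MeasurePreserving (T g) μ μ) {A : Set α} (hA : MeasurableSet A) {c : ℝ}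
    (hc : ∀ y, (#{g | T g y ∈ A} : ℝ) ≤ c * Fintype.card G) :
    μ A ≤ ENNReal.ofReal c := by
  have hcount : ∀ y, ∑ g, (T g ⁻¹' A).indicator 1 y ≤ ENNReal.ofReal c * Fintype.card G := by
    intro y
    have := ENNReal.ofReal_le_ofReal (hc y)
    rw [ENNReal.ofReal_natCast, ENNReal.ofReal_mul' (Nat.cast_nonneg _),
      ENNReal.ofReal_natCast] at this
    simpa [Set.indicator_apply, sum_boole] using this
  have hcard : (Fintype.card G : ℝ≥0∞) ≠ 0 := by simp
  rw [← ENNReal.mul_le_mul_iff_left hcard (ENNReal.natCast_ne_top _)]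
  calc μ A * Fintype.card G = ∑ g, μ (T g ⁻¹' A) := by
        simp [(hT _).measure_preimage hA.nullMeasurableSet, mul_comm]
    _ = ∫⁻ y, ∑ g, (T g ⁻¹' A).indicator 1 y ∂μ := by
        rw [lintegral_finsetSum _ fun g _ => measurable_one.indicator ((hT g).measurable hA)]
        simp [lintegral_indicator_one ((hT _).measurable hA)]
    _ ≤ ∫⁻ _, ENNReal.ofReal c * Fintype.card G ∂μ := lintegral_mono hcount
    _ = ENNReal.ofReal c * Fintype.card G := by simp

theorem selfnormalized_subgaussian_symmetric_general
    {Ω : Type*} [MeasureSpace Ω] [IsProbabilityMeasure (ℙ : Measure Ω)]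
    (m : ℕ)
    (X : Fin m → Ω → ℝ) (hXmeas : ∀ i, Measurable (X i))
    (hXindep : iIndepFun X ℙ)
    -- each `X_i` is symmetric about `0`
    (hXsymm : ∀ i, Measure.map (X i) ℙ = Measure.map (fun ω => -X i ω) ℙ)
    (t : ℝ) (ht : 0 < t) :
    ℙ {ω | 0 < ∑ i, (X i ω) ^ 2 ∧
        (∑ i, X i ω) / Real.sqrt (∑ i, (X i ω) ^ 2) > t}
      ≤ ENNReal.ofReal (Real.exp (-t ^ 2 / 2)) := by
  have _ : ∀ i, IsProbabilityMeasure (Measure.map (X i) ℙ) := fun i =>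
    Measure.isProbabilityMeasure_map (hXmeas i).aemeasurable
  have hlaw : Measure.map (fun ω i => X i ω) ℙ = Measure.pi fun i => Measure.map (X i) ℙ :=
    (iIndepFun_iff_map_fun_eq_pi_map fun i => (hXmeas i).aemeasurable).1 hXindep
  have hsymm : ∀ i, (Measure.map (X i) ℙ).IsNegInvariant := fun i =>
    ⟨by rw [Measure.neg, Measure.map_map measurable_neg (hXmeas i)]; exact (hXsymm i).symm⟩
  have hevent : ℙ {ω | 0 < ∑ i, (X i ω) ^ 2 ∧ (∑ i, X i ω) / √(∑ i, (X i ω) ^ 2) > t}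
      = Measure.map (fun ω i => X i ω) ℙ (selfNormalizedTail (Fin m) t) :=
    (Measure.map_apply (measurable_pi_lambda _ hXmeas) (measurableSet_selfNormalizedTail _ t)).symm
  rw [hevent, hlaw]
  exact measure_le_of_card_mem_le (measurePreserving_signFlip _)
    (measurableSet_selfNormalizedTail _ t) (card_signFlip_mem_selfNormalizedTail_le · ht.le)

/-- Sub-Gaussian tail bound for the self-normalized sum of
independent random variables that are symmetric about `0`: for every `t > 0`,
`P(∑ X_i / √(∑ X_i²) > t) ≤ exp(-t²/2)` (the event being contained in
`{∑ X_i² > 0}`). -/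
theorem selfnormalized_subgaussian_symmetric
    {Ω : Type*} [MeasureSpace Ω] [IsProbabilityMeasure (ℙ : Measure Ω)]
    (m : ℕ) (hm : 1 ≤ m)
    (X : Fin m → Ω → ℝ) (hXmeas : ∀ i, Measurable (X i))
    (hXindep : iIndepFun X ℙ)
    -- each `X_i` is symmetric about `0`
    (hXsymm : ∀ i, Measure.map (X i) ℙ = Measure.map (fun ω => -X i ω) ℙ)
    (t : ℝ) (ht : 0 < t) :
    ℙ {ω | 0 < ∑ i, (X i ω) ^ 2 ∧
        (∑ i, X i ω) / Real.sqrt (∑ i, (X i ω) ^ 2) > t}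
      ≤ ENNReal.ofReal (Real.exp (-t ^ 2 / 2)) :=
  selfnormalized_subgaussian_symmetric_general m X hXmeas hXindep hXsymm t ht
end

section
/- Let $X$ be a real random variable with a log-concave density $f$ that is symmetric about $0$, and set $f_0 := f(0)$ (which is positive and is the maximum of $f$). Then for every real $s > 0$: $\frac{1}{s+1} \leq (2f_0)^s\,\mathbb{E}|X|^s \leq \Gamma(s+1)$. Equivalently, $\mathbb{E}|X|^s$ is bounded below by the $s$-th absolute moment of the uniform distribution on $[-1/(2f_0), 1/(2f_0)]$ and bounded above by the $s$-th absolute moment of the Laplace distribution with density $f_0 e^{-2f_0|x|}$. -/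
open MeasureTheory ProbabilityTheory Set Filter
open scoped NNReal ENNReal Topology

lemma aux_four_point {f : ℝ → ℝ} (hf_nonneg : ∀ x, 0 ≤ f x)
    (hlc : ∀ x y a b : ℝ, 0 ≤ a → 0 ≤ b → a + b = 1 →
      f x ^ a * f y ^ b ≤ f (a * x + b * y))
    {t u x : ℝ} (htu : t ≤ u) (hux : u ≤ x) :
    f t * f x ≤ f u * f (x + t - u) := by
  rcases eq_or_lt_of_le (htu.trans hux) with h | h
  · rw [← h] at hux
    have hut : u = t := le_antisymm hux htu
    rw [hut, show x + t - t = x by ring]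
  · have hxt : (0:ℝ) < x - t := by linarith
    have ha : 0 ≤ (x - u) / (x - t) := div_nonneg (by linarith) hxt.le
    have hb : 0 ≤ (u - t) / (x - t) := div_nonneg (by linarith) hxt.le
    have hab : (x - u) / (x - t) + (u - t) / (x - t) = 1 := by
      field_simp
      ring
    have hab' : (u - t) / (x - t) + (x - u) / (x - t) = 1 := by linarith
    have h1 := hlc t x _ _ ha hb hab
    have h2 := hlc t x _ _ hb ha hab'
    have e1 : (x - u) / (x - t) * t + (u - t) / (x - t) * x = u := by
      field_simp
      ring
    have e2 : (u - t) / (x - t) * t + (x - u) / (x - t) * x = x + t - u := by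
      field_simp
      ring
    rw [e1] at h1
    rw [e2] at h2
    calc f t * f x
        = (f t ^ ((x - u) / (x - t)) * f x ^ ((u - t) / (x - t)))
          * (f t ^ ((u - t) / (x - t)) * f x ^ ((x - u) / (x - t))) := by
          rw [mul_mul_mul_comm, ← Real.rpow_add_of_nonneg (hf_nonneg t) ha hb,
            ← Real.rpow_add_of_nonneg (hf_nonneg x) hb ha, hab, hab', Real.rpow_one,
            Real.rpow_one]
      _ ≤ f u * f (x + t - u) :=
          mul_le_mul h1 h2
            (mul_nonneg (Real.rpow_nonneg (hf_nonneg t) _) (Real.rpow_nonneg (hf_nonneg x) _))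
            (hf_nonneg u)


lemma aux_refl {f : ℝ → ℝ} (hf_symm : ∀ x, f (-x) = f x) (t : ℝ) :
    ∫⁻ x in Iio (-t), ENNReal.ofReal (f x) = ∫⁻ x in Ioi t, ENNReal.ofReal (f x) := by
  have e := MeasurableEquiv.neg ℝ
  have hmap : Measure.map (MeasurableEquiv.neg ℝ) (volume : Measure ℝ) = volume := by
    simpa using Measure.map_neg_eq_self (volume : Measure ℝ)
  have hpre : (MeasurableEquiv.neg ℝ) ⁻¹' (Ioi t) = Iio (-t) := by
    ext x; simp [lt_neg]
  have hrestr : (volume : Measure ℝ).restrict (Ioi t)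
      = Measure.map (MeasurableEquiv.neg ℝ) ((volume : Measure ℝ).restrict (Iio (-t))) := by
    rw [← hpre, ← Measure.restrict_map (MeasurableEquiv.neg ℝ).measurable measurableSet_Ioi, hmap]
  rw [hrestr, lintegral_map_equiv]
  refine lintegral_congr fun x => ?_
  simp [hf_symm]

lemma aux_transl (f : ℝ → ℝ) (u : ℝ) :
    ∫⁻ x in Ioi u, ENNReal.ofReal (f (x - u)) = ∫⁻ x in Ioi 0, ENNReal.ofReal (f x) := by
  have hmap : Measure.map (MeasurableEquiv.addRight u) (volume : Measure ℝ) = volume := by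
    simpa using Measure.IsAddRightInvariant.map_add_right_eq_self (μ := (volume : Measure ℝ)) u
  have hpre : (MeasurableEquiv.addRight u) ⁻¹' (Ioi u) = Ioi (0:ℝ) := by
    ext x; simp [MeasurableEquiv.addRight]
  have hrestr : (volume : Measure ℝ).restrict (Ioi u)
      = Measure.map (MeasurableEquiv.addRight u) ((volume : Measure ℝ).restrict (Ioi 0)) := by
    rw [← hpre, ← Measure.restrict_map (MeasurableEquiv.addRight u).measurable measurableSet_Ioi,
      hmap]
  rw [hrestr, lintegral_map_equiv]
  refine lintegral_congr fun x => ?_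
  simp [MeasurableEquiv.addRight]


section
variable {f : ℝ → ℝ} (hf_nonneg : ∀ x, 0 ≤ f x)
    (hlc : ∀ x y a b : ℝ, 0 ≤ a → 0 ≤ b → a + b = 1 →
      f x ^ a * f y ^ b ≤ f (a * x + b * y))
    (hf_symm : ∀ x, f (-x) = f x)
    (hprob : IsProbabilityMeasure (volume.withDensity (fun x => ENNReal.ofReal (f x))))

local notation "μ" => volume.withDensity (fun x => ENNReal.ofReal (f x))

include hf_nonneg hlc hf_symm in
lemma aux_max (x : ℝ) : f x ≤ f 0 := by
  have h := hlc x (-x) (1/2) (1/2) (by norm_num) (by norm_num) (by norm_num)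
  rw [show (1/2 : ℝ) * x + (1/2) * (-x) = 0 by ring, hf_symm,
    ← Real.rpow_add_of_nonneg (hf_nonneg x) (by norm_num) (by norm_num)] at h
  norm_num at h
  exact h

include hf_nonneg hlc hf_symm hprob in
lemma aux_f0_pos : 0 < f 0 := by
  rcases lt_or_eq_of_le (hf_nonneg 0) with h | h
  · exact h
  · exfalso
    have hzero : ∀ x, f x = 0 := fun x =>
      le_antisymm ((aux_max hf_nonneg hlc hf_symm x).trans h.symm.le) (hf_nonneg x)
    have : (μ : Measure ℝ) univ = 1 := measure_univ
    rw [withDensity_apply _ MeasurableSet.univ] at this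
    simp [hzero] at this

include hf_symm in
lemma aux_reflμ (t : ℝ) : (μ : Measure ℝ) (Iio (-t)) = μ (Ioi t) := by
  rw [withDensity_apply _ measurableSet_Iio, withDensity_apply _ measurableSet_Ioi]
  exact aux_refl hf_symm t

include hf_symm hprob in
lemma aux_half : (μ : Measure ℝ) (Ioi 0) = 2⁻¹ := by
  have hcompl : (μ : Measure ℝ) (Iic 0) + μ (Ioi 0) = 1 := by
    rw [show Ioi (0:ℝ) = (Iic 0)ᶜ by ext x; simp [not_le]]
    exact (measure_add_measure_compl (measurableSet_Iic : MeasurableSet (Iic (0:ℝ)))).trans measure_univ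
  have hsing : (μ : Measure ℝ) {0} = 0 := by
    rw [withDensity_apply _ (measurableSet_singleton 0)]
    rw [Measure.restrict_eq_zero.mpr (by simp)]
    simp
  have hIic : (μ : Measure ℝ) (Iic 0) = μ (Iio 0) := by
    apply le_antisymm
    · have : Iic (0:ℝ) = Iio 0 ∪ {0} := by
        ext x; simp [le_iff_lt_or_eq]
      rw [this]
      refine (measure_union_le _ _).trans ?_
      rw [hsing, add_zero]
    · exact measure_mono Iio_subset_Iic_self
  have hrefl := aux_reflμ (f := f) hf_symm 0
  rw [neg_zero] at hrefl
  rw [hIic, hrefl] at hcompl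
  have h2 : (2 : ℝ≥0∞) * μ (Ioi 0) = 1 := by rw [two_mul]; exact hcompl
  calc (μ : Measure ℝ) (Ioi 0) = 2⁻¹ * (2 * μ (Ioi 0)) := by
        rw [← mul_assoc, ENNReal.inv_mul_cancel two_ne_zero ENNReal.ofNat_ne_top, one_mul]
    _ = 2⁻¹ := by rw [h2, mul_one]

include hf_nonneg hlc hf_symm hprob in
lemma aux_hazard {u : ℝ} (hu : 0 ≤ u) :
    ENNReal.ofReal (f 0) * (μ : Measure ℝ) (Ioi u) ≤ ENNReal.ofReal (f u) * 2⁻¹ := by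
  have h1 : ENNReal.ofReal (f 0) * (μ : Measure ℝ) (Ioi u)
      = ∫⁻ x in Ioi u, ENNReal.ofReal (f 0 * f x) := by
    rw [withDensity_apply _ measurableSet_Ioi,
      ← lintegral_const_mul' _ _ ENNReal.ofReal_ne_top]
    exact lintegral_congr fun x => (ENNReal.ofReal_mul (hf_nonneg 0)).symm
  have h2 : ∫⁻ x in Ioi u, ENNReal.ofReal (f 0 * f x)
      ≤ ∫⁻ x in Ioi u, ENNReal.ofReal (f u * f (x - u)) := by
    refine lintegral_mono_ae ?_
    filter_upwards [ae_restrict_mem measurableSet_Ioi] with x hx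
    apply ENNReal.ofReal_le_ofReal
    have := aux_four_point hf_nonneg hlc hu (le_of_lt hx)
    rwa [show x + 0 - u = x - u by ring] at this
  have h3 : ∫⁻ x in Ioi u, ENNReal.ofReal (f u * f (x - u))
      = ENNReal.ofReal (f u) * (μ : Measure ℝ) (Ioi 0) := by
    calc ∫⁻ x in Ioi u, ENNReal.ofReal (f u * f (x - u))
        = ∫⁻ x in Ioi u, ENNReal.ofReal (f u) * ENNReal.ofReal (f (x - u)) :=
          lintegral_congr fun x => ENNReal.ofReal_mul (hf_nonneg u)
      _ = ENNReal.ofReal (f u) * ∫⁻ x in Ioi u, ENNReal.ofReal (f (x - u)) :=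
          lintegral_const_mul' _ _ ENNReal.ofReal_ne_top
      _ = ENNReal.ofReal (f u) * (μ : Measure ℝ) (Ioi 0) := by
          rw [aux_transl f u, withDensity_apply _ measurableSet_Ioi]
  rw [h1, ← aux_half hf_symm hprob]
  exact h2.trans h3.le

include hf_nonneg hlc hf_symm hprob in
lemma aux_step {a b : ℝ} (ha : 0 ≤ a) (hab : a ≤ b) :
    (μ : Measure ℝ) (Ioi b) + ENNReal.ofReal (2 * f 0 * (b - a)) * μ (Ioi b)
      ≤ μ (Ioi a) := by
  have hsplit : (μ : Measure ℝ) (Ioi a) = μ (Ioc a b) + μ (Ioi b) := by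
    rw [← Ioc_union_Ioi_eq_Ioi hab,
      measure_union (Ioc_disjoint_Ioi le_rfl) measurableSet_Ioi]
  have hpt : ∀ x ∈ Ioc a b,
      (2:ℝ≥0∞) * ENNReal.ofReal (f 0) * μ (Ioi b) ≤ ENNReal.ofReal (f x) := by
    intro x hx
    have hx0 : 0 ≤ x := ha.trans hx.1.le
    have h := aux_hazard hf_nonneg hlc hf_symm hprob hx0
    have h2 : (2:ℝ≥0∞) * (ENNReal.ofReal (f 0) * μ (Ioi x)) ≤ ENNReal.ofReal (f x) := by
      refine (mul_le_mul_right h 2).trans_eq ?_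
      rw [mul_comm (ENNReal.ofReal (f x)) 2⁻¹, ← mul_assoc,
        ENNReal.mul_inv_cancel two_ne_zero ENNReal.ofNat_ne_top, one_mul]
    refine le_trans ?_ h2
    rw [mul_assoc]
    exact mul_le_mul_right (mul_le_mul_right (measure_mono (Ioi_subset_Ioi hx.2)) _) _
  have hIoc : (2:ℝ≥0∞) * ENNReal.ofReal (f 0) * μ (Ioi b) * ENNReal.ofReal (b - a)
      ≤ (μ : Measure ℝ) (Ioc a b) := by
    rw [withDensity_apply _ measurableSet_Ioc]
    calc (2:ℝ≥0∞) * ENNReal.ofReal (f 0) * μ (Ioi b) * ENNReal.ofReal (b - a)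
        = ∫⁻ _ in Ioc a b, (2:ℝ≥0∞) * ENNReal.ofReal (f 0) * μ (Ioi b) := by
          rw [setLIntegral_const, Real.volume_Ioc]
      _ ≤ ∫⁻ x in Ioc a b, ENNReal.ofReal (f x) := by
          refine lintegral_mono_ae ?_
          filter_upwards [ae_restrict_mem measurableSet_Ioc] with x hx
          exact hpt x hx
  have heq : ENNReal.ofReal (2 * f 0 * (b - a)) * μ (Ioi b)
      = (2:ℝ≥0∞) * ENNReal.ofReal (f 0) * μ (Ioi b) * ENNReal.ofReal (b - a) := by
    rw [ENNReal.ofReal_mul (by nlinarith [hf_nonneg 0] : (0:ℝ) ≤ 2 * f 0),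
      ENNReal.ofReal_mul (by norm_num : (0:ℝ) ≤ 2),
      (by norm_num : ENNReal.ofReal 2 = 2)]
    ring
  rw [hsplit, heq]
  rw [add_comm]
  exact add_le_add hIoc le_rfl

include hf_nonneg hlc hf_symm hprob in
lemma aux_iter (n : ℕ) {t : ℝ} (ht : 0 ≤ t) :
    (1 + ENNReal.ofReal (2 * f 0 * t)) ^ n * (μ : Measure ℝ) (Ioi (n * t)) ≤ 2⁻¹ := by
  induction n with
  | zero => simp [aux_half hf_symm hprob]
  | succ n ih =>
    have ha : (0:ℝ) ≤ n * t := by positivity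
    have hab : (n:ℝ) * t ≤ (n + 1 : ℕ) * t := by
      push_cast
      nlinarith
    have hstep := aux_step hf_nonneg hlc hf_symm hprob ha hab
    rw [show ((n + 1 : ℕ) : ℝ) * t - n * t = t by push_cast; ring] at hstep
    calc (1 + ENNReal.ofReal (2 * f 0 * t)) ^ (n + 1) * μ (Ioi ((n + 1 : ℕ) * t))
        = (1 + ENNReal.ofReal (2 * f 0 * t)) ^ n *
            (μ (Ioi ((n + 1 : ℕ) * t)) + ENNReal.ofReal (2 * f 0 * t) * μ (Ioi ((n + 1 : ℕ) * t))) := by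
          ring
      _ ≤ (1 + ENNReal.ofReal (2 * f 0 * t)) ^ n * μ (Ioi (n * t)) :=
          mul_le_mul_right hstep _
      _ ≤ 2⁻¹ := ih

include hf_nonneg hlc hf_symm hprob in
lemma aux_exp_tail {t : ℝ} (ht : 0 ≤ t) :
    (μ : Measure ℝ) (Ioi t) ≤ ENNReal.ofReal ((1/2) * Real.exp (-(2 * f 0 * t))) := by
  set c : ℝ := 2 * f 0 with hc_def
  have hc : 0 ≤ c := by
    have := hf_nonneg 0
    positivity
  set p : ℝ := ((μ : Measure ℝ) (Ioi t)).toReal with hp_def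
  have key : ∀ n : ℕ, 1 ≤ n → (1 + c * t / n) ^ n * p ≤ 1 / 2 := by
    intro n hn
    have hn0 : ((n:ℝ)) ≠ 0 := Nat.cast_ne_zero.mpr (by omega)
    have htn : (0:ℝ) ≤ t / n := by positivity
    have h := aux_iter hf_nonneg hlc hf_symm hprob n htn
    rw [show (n:ℝ) * (t / n) = t by field_simp] at h
    have hofr : (1 + ENNReal.ofReal (c * (t / n))) = ENNReal.ofReal (1 + c * t / n) := by
      rw [ENNReal.ofReal_add zero_le_one (by positivity), ENNReal.ofReal_one, mul_div_assoc]
    rw [hofr, ← ENNReal.ofReal_pow (by positivity)] at h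
    have h2 := ENNReal.toReal_mono (by simp) h
    rw [ENNReal.toReal_mul, ENNReal.toReal_ofReal (by positivity)] at h2
    have hhalf : ((2:ℝ≥0∞)⁻¹).toReal = 1/2 := by simp
    rw [hhalf] at h2
    exact h2
  have hlim : Tendsto (fun n : ℕ => (1 + c * t / n) ^ n * p) atTop
      (𝓝 (Real.exp (c * t) * p)) :=
    (Real.tendsto_one_add_div_pow_exp (c * t)).mul_const _
  have hle : Real.exp (c * t) * p ≤ 1 / 2 :=
    le_of_tendsto hlim (eventually_atTop.2 ⟨1, fun n hn => key n hn⟩)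
  have hp_le : p ≤ (1/2) * Real.exp (-(c * t)) := by
    rw [Real.exp_neg]
    rw [mul_comm] at hle
    have hE : (0:ℝ) < Real.exp (c * t) := Real.exp_pos _
    calc p = p * Real.exp (c * t) * (Real.exp (c * t))⁻¹ := by field_simp
      _ ≤ (1/2) * (Real.exp (c * t))⁻¹ := by
          apply mul_le_mul_of_nonneg_right hle (by positivity)
  calc (μ : Measure ℝ) (Ioi t) = ENNReal.ofReal p :=
        (ENNReal.ofReal_toReal (measure_ne_top _ _)).symm
    _ ≤ ENNReal.ofReal ((1/2) * Real.exp (-(c * t))) := ENNReal.ofReal_le_ofReal hp_le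
end


/-- If `X` has a log-concave density `f` symmetric about `0`
and `f₀ := f(0)` (which is positive), then for every `s > 0`:
`1/(s+1) ≤ (2f₀)^s E|X|^s ≤ Γ(s+1)`. -/
theorem logconcave_symmetric_moment_sandwich
    {Ω : Type*} [MeasureSpace Ω] [IsProbabilityMeasure (ℙ : Measure Ω)]
    (X : Ω → ℝ) (hXmeas : Measurable X)
    (f : ℝ → ℝ) (hf_nonneg : ∀ x, 0 ≤ f x)
    -- `f` is the density of `X` with respect to Lebesgue measure
    (hf_density : Measure.map X (ℙ : Measure Ω) =
      volume.withDensity (fun x => ENNReal.ofReal (f x)))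
    -- `f` is log-concave
    (hf_logconcave : ∀ x y a b : ℝ, 0 ≤ a → 0 ≤ b → a + b = 1 →
      f x ^ a * f y ^ b ≤ f (a * x + b * y))
    -- `f` is symmetric about `0`
    (hf_symm : ∀ x, f (-x) = f x)
    (s : ℝ) (hs : 0 < s) :
    0 < f 0 ∧
      1 / (s + 1) ≤ (2 * f 0) ^ s * ∫ ω, |X ω| ^ s ∂ℙ ∧
      (2 * f 0) ^ s * ∫ ω, |X ω| ^ s ∂ℙ ≤ Real.Gamma (s + 1) := by
  have hprob : IsProbabilityMeasure (volume.withDensity (fun x => ENNReal.ofReal (f x))) := by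
    rw [← hf_density]
    exact Measure.isProbabilityMeasure_map hXmeas.aemeasurable
  have hf0 : 0 < f 0 := aux_f0_pos hf_nonneg hf_logconcave hf_symm hprob
  have hb : (0:ℝ) < 2 * f 0 := by positivity
  have hmax : ∀ x, f x ≤ f 0 := aux_max hf_nonneg hf_logconcave hf_symm
  -- tail identity
  have htail_eq : ∀ t : ℝ, 0 ≤ t → (ℙ : Measure Ω) {ω | t < |X ω|}
      = 2 * (volume.withDensity fun x => ENNReal.ofReal (f x)) (Set.Ioi t) := by
    intro t ht
    have hset : {x : ℝ | t < |x|} = Set.Iio (-t) ∪ Set.Ioi t := by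
      ext x
      simp only [mem_setOf_eq, mem_union, mem_Iio, mem_Ioi, lt_abs, lt_neg]
      tauto
    have hmeas : MeasurableSet {x : ℝ | t < |x|} := by
      rw [hset]; exact measurableSet_Iio.union measurableSet_Ioi
    have : (ℙ : Measure Ω) {ω | t < |X ω|} = (Measure.map X ℙ) {x : ℝ | t < |x|} := by
      rw [Measure.map_apply hXmeas hmeas]
      rfl
    rw [this, hf_density, hset,
      measure_union (((Set.Iio_disjoint_Ici (by linarith)).mono_right Ioi_subset_Ici_self) :
        Disjoint (Iio (-t)) (Ioi t)) measurableSet_Ioi,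
      aux_reflμ hf_symm t, two_mul]
  -- upper tail bound
  have htail_ub : ∀ t : ℝ, 0 ≤ t → (ℙ : Measure Ω) {ω | t < |X ω|}
      ≤ ENNReal.ofReal (Real.exp (-(2 * f 0 * t))) := by
    intro t ht
    rw [htail_eq t ht]
    calc 2 * (volume.withDensity fun x => ENNReal.ofReal (f x)) (Set.Ioi t)
        ≤ 2 * ENNReal.ofReal ((1/2) * Real.exp (-(2 * f 0 * t))) :=
          mul_le_mul_right (aux_exp_tail hf_nonneg hf_logconcave hf_symm hprob ht) 2
      _ = ENNReal.ofReal (Real.exp (-(2 * f 0 * t))) := by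
          rw [← (by norm_num : ENNReal.ofReal 2 = 2), ← ENNReal.ofReal_mul (by norm_num)]
          congr 1
          ring
  -- lower tail bound
  have htail_lb : ∀ t : ℝ, 0 ≤ t →
      1 - ENNReal.ofReal (2 * f 0 * t) ≤ (ℙ : Measure Ω) {ω | t < |X ω|} := by
    intro t ht
    have hmeasle : MeasurableSet {ω | |X ω| ≤ t} := hXmeas.abs measurableSet_Iic
    have hcompl : {ω | t < |X ω|} = {ω | |X ω| ≤ t}ᶜ := by
      ext ω; simp [not_le]
    have hle : (ℙ : Measure Ω) {ω | |X ω| ≤ t} ≤ ENNReal.ofReal (2 * f 0 * t) := by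
      have h1 : {ω | |X ω| ≤ t} = X ⁻¹' (Icc (-t) t) := by
        ext ω; simp [abs_le]
      have h2 : (ℙ : Measure Ω) {ω | |X ω| ≤ t}
          = (volume.withDensity fun x => ENNReal.ofReal (f x)) (Icc (-t) t) := by
        rw [h1, ← Measure.map_apply hXmeas measurableSet_Icc, hf_density]
      rw [h2, withDensity_apply _ measurableSet_Icc]
      calc ∫⁻ x in Icc (-t) t, ENNReal.ofReal (f x)
          ≤ ∫⁻ _ in Icc (-t) t, ENNReal.ofReal (f 0) :=
            lintegral_mono fun x => ENNReal.ofReal_le_ofReal (hmax x)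
        _ = ENNReal.ofReal (f 0) * ENNReal.ofReal (t - -t) := by
            rw [setLIntegral_const, Real.volume_Icc]
        _ = ENNReal.ofReal (2 * f 0 * t) := by
            rw [← ENNReal.ofReal_mul hf0.le]
            congr 1
            ring
    rw [hcompl, measure_compl hmeasle (measure_ne_top _ _), measure_univ]
    exact tsub_le_tsub_left hle 1
  -- layer cake
  have hlayer : ∫⁻ ω, ENNReal.ofReal (|X ω| ^ s) ∂ℙ
      = ∫⁻ t in Set.Ioi 0, (ℙ : Measure Ω) {ω | t < |X ω|} * ENNReal.ofReal (s * t ^ (s-1)) := by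
    have h := lintegral_comp_eq_lintegral_meas_lt_mul (ℙ : Measure Ω) (f := fun ω => |X ω|)
      (g := fun t => s * t ^ (s-1)) (ae_of_all _ fun ω => abs_nonneg _)
      hXmeas.abs.aemeasurable
      (fun t ht => (intervalIntegral.intervalIntegrable_rpow' (by linarith)).const_mul s)
      (by filter_upwards [ae_restrict_mem measurableSet_Ioi] with t ht
          exact mul_nonneg hs.le (Real.rpow_nonneg (le_of_lt ht) _))
    rw [← h]
    refine lintegral_congr fun ω => ?_
    congr 1
    rw [intervalIntegral.integral_const_mul, integral_rpow (Or.inl (by linarith)),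
      show s - 1 + 1 = s by ring, Real.zero_rpow hs.ne']
    field_simp
    ring
  -- upper estimate on the lintegral
  have hInt : IntegrableOn (fun t : ℝ => s * t ^ (s-1) * Real.exp (-(2 * f 0) * t))
      (Ioi 0) volume := by
    have base := integrableOn_rpow_mul_exp_neg_mul_rpow
      (show -1 < s - 1 by linarith) (show (0:ℝ) < 1 by norm_num) hb
    simp only [Real.rpow_one] at base
    have h2 := base.const_mul s
    simpa [mul_assoc, IntegrableOn] using h2
  have hval : ∫ t in Ioi 0, s * t ^ (s-1) * Real.exp (-(2 * f 0) * t)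
      = (2 * f 0) ^ (-s) * Real.Gamma (s + 1) := by
    have hval0 := integral_rpow_mul_exp_neg_mul_rpow
      (show (0:ℝ) < 1 by norm_num) (show -1 < s - 1 by linarith) hb
    simp only [Real.rpow_one] at hval0
    rw [show -(s-1+1)/1 = -s by ring, show (s-1+1)/1 = s by ring] at hval0
    calc ∫ t in Ioi 0, s * t ^ (s-1) * Real.exp (-(2 * f 0) * t)
        = s * ∫ t in Ioi 0, t ^ (s-1) * Real.exp (-(2 * f 0) * t) := by
          simp_rw [mul_assoc]
          exact integral_const_mul s _
      _ = s * ((2 * f 0) ^ (-s) * (1/1) * Real.Gamma s) := by rw [hval0]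
      _ = (2 * f 0) ^ (-s) * Real.Gamma (s + 1) := by
          rw [Real.Gamma_add_one hs.ne']
          ring
  have hupper : ∫⁻ ω, ENNReal.ofReal (|X ω| ^ s) ∂ℙ
      ≤ ENNReal.ofReal ((2 * f 0) ^ (-s) * Real.Gamma (s + 1)) := by
    rw [hlayer]
    calc ∫⁻ t in Ioi 0, (ℙ : Measure Ω) {ω | t < |X ω|} * ENNReal.ofReal (s * t ^ (s-1))
        ≤ ∫⁻ t in Ioi 0, ENNReal.ofReal (s * t ^ (s-1) * Real.exp (-(2 * f 0) * t)) := by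
          refine lintegral_mono_ae ?_
          filter_upwards [ae_restrict_mem measurableSet_Ioi] with t ht
          calc (ℙ : Measure Ω) {ω | t < |X ω|} * ENNReal.ofReal (s * t ^ (s-1))
              ≤ ENNReal.ofReal (Real.exp (-(2 * f 0 * t))) * ENNReal.ofReal (s * t ^ (s-1)) :=
                mul_le_mul_left (htail_ub t (le_of_lt ht)) _
            _ = ENNReal.ofReal (s * t ^ (s-1) * Real.exp (-(2 * f 0) * t)) := by
                rw [← ENNReal.ofReal_mul (Real.exp_nonneg _)]
                congr 1
                ring
      _ = ENNReal.ofReal (∫ t in Ioi 0, s * t ^ (s-1) * Real.exp (-(2 * f 0) * t)) := by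
          rw [ofReal_integral_eq_lintegral_ofReal hInt ?_]
          filter_upwards [ae_restrict_mem measurableSet_Ioi] with t ht
          exact mul_nonneg (mul_nonneg hs.le (Real.rpow_nonneg ht.le _)) (Real.exp_nonneg _)
      _ ≤ ENNReal.ofReal ((2 * f 0) ^ (-s) * Real.Gamma (s + 1)) := le_of_eq (by rw [hval])
  -- lower estimate
  have hT : (0:ℝ) < (2 * f 0)⁻¹ := by positivity
  have hII1 : IntervalIntegrable (fun t : ℝ => s * t ^ (s-1) - 2 * f 0 * s * t ^ s)
      volume 0 ((2 * f 0)⁻¹) :=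
    ((intervalIntegral.intervalIntegrable_rpow' (by linarith)).const_mul s).sub
      ((intervalIntegral.intervalIntegrable_rpow' (by linarith)).const_mul (2 * f 0 * s))
  have heqOn : EqOn (fun t : ℝ => s * t ^ (s-1) - 2 * f 0 * s * t ^ s)
      (fun t : ℝ => (1 - 2 * f 0 * t) * (s * t ^ (s-1))) (Icc 0 ((2 * f 0)⁻¹)) := by
    intro t ht
    rcases eq_or_lt_of_le ht.1 with h0 | h0
    · simp only [← h0, Real.zero_rpow hs.ne']
      ring
    · have hts : t ^ s = t ^ (s-1) * t := by
        have h := Real.rpow_add h0 (s-1) 1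
        rw [Real.rpow_one, show s - 1 + 1 = s by ring] at h
        exact h
      simp only [hts]
      ring
  have hIocval : ∫ t in Ioc (0:ℝ) ((2 * f 0)⁻¹), (1 - 2 * f 0 * t) * (s * t ^ (s-1))
      = (2 * f 0) ^ (-s) / (s + 1) := by
    have hcongr : ∫ t in (0:ℝ)..((2 * f 0)⁻¹), (1 - 2 * f 0 * t) * (s * t ^ (s-1))
        = ∫ t in (0:ℝ)..((2 * f 0)⁻¹), (s * t ^ (s-1) - 2 * f 0 * s * t ^ s) :=
      (intervalIntegral.integral_congr (by rw [uIcc_of_le hT.le]; exact heqOn)).symm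
    rw [← intervalIntegral.integral_of_le hT.le, hcongr,
      intervalIntegral.integral_sub
        ((intervalIntegral.intervalIntegrable_rpow' (by linarith)).const_mul s)
        ((intervalIntegral.intervalIntegrable_rpow' (by linarith)).const_mul (2 * f 0 * s)),
      intervalIntegral.integral_const_mul, intervalIntegral.integral_const_mul,
      integral_rpow (Or.inl (by linarith : (-1:ℝ) < s - 1)),
      integral_rpow (Or.inl (by linarith : (-1:ℝ) < s)),
      show s - 1 + 1 = s by ring, Real.zero_rpow hs.ne',
      Real.zero_rpow (by linarith : s + 1 ≠ 0)]
    have hTs1 : ((2 * f 0)⁻¹) ^ (s + 1) = ((2 * f 0)⁻¹) ^ s * (2 * f 0)⁻¹ := by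
      have h := Real.rpow_add hT s 1
      rw [Real.rpow_one] at h
      exact h
    have hcan : 2 * f 0 * (2 * f 0)⁻¹ = 1 := mul_inv_cancel₀ hb.ne'
    have hinv : ((2 * f 0)⁻¹) ^ s = (2 * f 0) ^ (-s) := by
      rw [Real.rpow_neg hb.le, Real.inv_rpow hb.le]
    rw [hTs1, hinv]
    field_simp
    ring
  have hlower : ENNReal.ofReal ((2 * f 0) ^ (-s) / (s + 1))
      ≤ ∫⁻ ω, ENNReal.ofReal (|X ω| ^ s) ∂ℙ := by
    rw [hlayer]
    have hIntOn : IntegrableOn (fun t : ℝ => (1 - 2 * f 0 * t) * (s * t ^ (s-1)))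
        (Ioc 0 ((2 * f 0)⁻¹)) volume :=
      (hII1.1).congr_fun (heqOn.mono Ioc_subset_Icc_self) measurableSet_Ioc
    calc ENNReal.ofReal ((2 * f 0) ^ (-s) / (s + 1))
        = ENNReal.ofReal (∫ t in Ioc (0:ℝ) ((2 * f 0)⁻¹), (1 - 2 * f 0 * t) * (s * t ^ (s-1))) := by
          rw [hIocval]
      _ = ∫⁻ t in Ioc (0:ℝ) ((2 * f 0)⁻¹), ENNReal.ofReal ((1 - 2 * f 0 * t) * (s * t ^ (s-1))) := by
          refine ofReal_integral_eq_lintegral_ofReal hIntOn ?_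
          filter_upwards [ae_restrict_mem measurableSet_Ioc] with t ht
          have h1 : 2 * f 0 * t ≤ 1 := by
            have := mul_le_mul_of_nonneg_left ht.2 hb.le
            rwa [mul_inv_cancel₀ hb.ne'] at this
          have h2 : (0:ℝ) ≤ t ^ (s - 1) := Real.rpow_nonneg ht.1.le _
          exact mul_nonneg (by linarith) (mul_nonneg hs.le h2)
      _ ≤ ∫⁻ t in Ioc (0:ℝ) ((2 * f 0)⁻¹),
            (ℙ : Measure Ω) {ω | t < |X ω|} * ENNReal.ofReal (s * t ^ (s-1)) := by
          refine lintegral_mono_ae ?_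
          filter_upwards [ae_restrict_mem measurableSet_Ioc] with t ht
          have h1 : 2 * f 0 * t ≤ 1 := by
            have := mul_le_mul_of_nonneg_left ht.2 hb.le
            rwa [mul_inv_cancel₀ hb.ne'] at this
          have h2 : (0:ℝ) ≤ 2 * f 0 * t := mul_nonneg hb.le ht.1.le
          calc ENNReal.ofReal ((1 - 2 * f 0 * t) * (s * t ^ (s-1)))
              = ENNReal.ofReal (1 - 2 * f 0 * t) * ENNReal.ofReal (s * t ^ (s-1)) :=
                ENNReal.ofReal_mul (by linarith)
            _ ≤ (ℙ : Measure Ω) {ω | t < |X ω|} * ENNReal.ofReal (s * t ^ (s-1)) := by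
                refine mul_le_mul_left ?_ _
                have heq1 : ENNReal.ofReal (1 - 2 * f 0 * t)
                    = 1 - ENNReal.ofReal (2 * f 0 * t) := by
                  rw [ENNReal.ofReal_sub _ h2, ENNReal.ofReal_one]
                rw [heq1]
                exact htail_lb t ht.1.le
      _ ≤ ∫⁻ t in Ioi (0:ℝ),
            (ℙ : Measure Ω) {ω | t < |X ω|} * ENNReal.ofReal (s * t ^ (s-1)) :=
          lintegral_mono' (Measure.restrict_mono Ioc_subset_Ioi_self le_rfl) le_rfl
  -- final assembly
  have hfin : ∫⁻ ω, ENNReal.ofReal (|X ω| ^ s) ∂ℙ ≠ ⊤ :=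
    (lt_of_le_of_lt hupper ENNReal.ofReal_lt_top).ne
  have hmeasE : Measurable fun ω => |X ω| ^ s := by fun_prop
  have hEeq : ∫ ω, |X ω| ^ s ∂ℙ = (∫⁻ ω, ENNReal.ofReal (|X ω| ^ s) ∂ℙ).toReal := by
    rw [integral_eq_lintegral_of_nonneg_ae
      (ae_of_all _ fun ω => Real.rpow_nonneg (abs_nonneg _) s) hmeasE.aestronglyMeasurable]
  have hbb : (2 * f 0) ^ s * (2 * f 0) ^ (-s) = 1 := by
    rw [← Real.rpow_add hb, add_neg_cancel, Real.rpow_zero]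
  refine ⟨hf0, ?_, ?_⟩
  · have h1 : (2 * f 0) ^ (-s) / (s + 1) ≤ (∫⁻ ω, ENNReal.ofReal (|X ω| ^ s) ∂ℙ).toReal :=
      (ENNReal.ofReal_le_iff_le_toReal hfin).mp hlower
    rw [hEeq]
    calc 1 / (s + 1) = (2 * f 0) ^ s * ((2 * f 0) ^ (-s) / (s + 1)) := by
          rw [← mul_div_assoc, hbb]
      _ ≤ _ := mul_le_mul_of_nonneg_left h1 (Real.rpow_nonneg hb.le s)
  · have h2 : (∫⁻ ω, ENNReal.ofReal (|X ω| ^ s) ∂ℙ).toReal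
        ≤ (2 * f 0) ^ (-s) * Real.Gamma (s + 1) := by
      have h3 := ENNReal.toReal_mono ENNReal.ofReal_ne_top hupper
      rwa [ENNReal.toReal_ofReal (mul_nonneg (Real.rpow_nonneg hb.le _)
        (Real.Gamma_pos_of_pos (by linarith)).le)] at h3
    rw [hEeq]
    calc (2 * f 0) ^ s * (∫⁻ ω, ENNReal.ofReal (|X ω| ^ s) ∂ℙ).toReal
        ≤ (2 * f 0) ^ s * ((2 * f 0) ^ (-s) * Real.Gamma (s + 1)) :=
          mul_le_mul_of_nonneg_left h2 (Real.rpow_nonneg hb.le s)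
      _ = Real.Gamma (s + 1) := by rw [← mul_assoc, hbb, one_mul]
end
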